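/- arXiv:2005.07224 — 5 statements merged into one kernel-verified Lean document; each statement's English description precedes it below -/
import Mathlib

section
/- Let s > t ≥ 1 be fixed integers. For all sufficiently large n there exists a simple graph G on n vertices with exactly ⌊n²/4⌋ + t edges, triangle covering number τ₃(G) = s, and exactly N₃(G) = s·n⁻_{s,t}(n) − m_{s,t}(n) triangles. -/
open Finset SimpleGraph

/-- Number of `k`-cliques of a graph. -/
noncomputable def cliqueCount {V : Type*} (G : SimpleGraph V) (k : ℕ) : ℕ :=
  Nat.card {T : Finset V // G.IsNClique k T}

/-- `K_k`-covering number: minimum size of a vertex set meeting every `k`-clique. -/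
noncomputable def cliqueCover {V : Type*} [Fintype V] [DecidableEq V]
    (G : SimpleGraph V) (k : ℕ) : ℕ :=
  sInf {m | ∃ S : Finset V, S.card = m ∧ ∀ T : Finset V, G.IsNClique k T → ∃ v ∈ T, v ∈ S}

/-- Number of edges of a graph. -/
noncomputable def edgeCount {V : Type*} (G : SimpleGraph V) : ℕ := Nat.card G.edgeSet

/-- Number of edges of the Turán graph `T_r(n)`. -/
noncomputable def turanEdges (r n : ℕ) : ℕ := edgeCount (turanGraph n r)

/-- `e(n) = n² - 4⌊n²/4⌋`. -/
def eDef (n : ℕ) : ℕ := n ^ 2 - 4 * (n ^ 2 / 4)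

/-- `m_{s,t}(n)`: least `m` such that `4s - 4t - 4m + e(n)` is a perfect square. -/
noncomputable def mst (s t n : ℕ) : ℕ :=
  sInf {m : ℕ | ∃ p : ℕ, (p : ℤ) ^ 2 = 4 * s - 4 * t - 4 * m + eDef n}

/-- `R₃(n,s,t) = (4s - 4t - 4m_{s,t}(n) + e(n))^{1/2}`. -/
noncomputable def R3 (s t n : ℕ) : ℕ :=
  Nat.sqrt (4 * (s : ℤ) - 4 * t - 4 * mst s t n + eDef n).toNat

/-- Number of copies of `F` in `G`: subgraphs of `G` isomorphic to `F`. -/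
noncomputable def copyCount {α V : Type*} (F : SimpleGraph α) (G : SimpleGraph V) : ℕ :=
  Nat.card {H : G.Subgraph // Nonempty (F ≃g H.coe)}

/-- `F`-covering number of `G`. -/
noncomputable def coverNumber {α V : Type*} [Fintype V] [DecidableEq V]
    (F : SimpleGraph α) (G : SimpleGraph V) : ℕ :=
  sInf {m | ∃ S : Finset V, S.card = m ∧
    ∀ H : G.Subgraph, Nonempty (F ≃g H.coe) → ∃ v ∈ H.verts, v ∈ S}

/-- A graph `F` is `k`-critical. -/
def IsCritical {α : Type*} (k : ℕ) (F : SimpleGraph α) : Prop :=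
  F.chromaticNumber = k ∧ ∃ e ∈ F.edgeSet, (F.deleteEdges {e}).chromaticNumber < k

/-- `c(n,F)`: minimum number of copies of `F` after adding one new edge to `T_{k-1}(n)`. -/
noncomputable def cnF {α : Type*} (k n : ℕ) (F : SimpleGraph α) : ℕ :=
  sInf {c | ∃ u v : Fin n, u ≠ v ∧ ¬ (turanGraph n (k - 1)).Adj u v ∧
    c = copyCount F (turanGraph n (k - 1) ⊔ fromEdgeSet {s(u, v)})}

/-- `N_k(n,s)` from Theorem 1.3. -/
def NkBound (k s n : ℕ) : ℕ :=
  if n % (k - 1) = 0 then s * (n / (k - 1)) ^ (k - 3) * (n / (k - 1) - 1)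
  else if n % (k - 1) = 1 then s * (n / (k - 1)) ^ (k - 2) - (n / (k - 1)) ^ (k - 3)
  else s * (n / (k - 1) + 1) ^ (n % (k - 1) - 2) * (n / (k - 1)) ^ (k - n % (k - 1))

/-- `R_k(n,s,t)`. -/
noncomputable def Rk (k s t n : ℕ) : ℝ :=
  Real.sqrt ((2 * ((k : ℝ) - 1) * ((s : ℝ) - t) +
    ((k : ℝ) - 1 - (n % (k - 1) : ℕ)) * (n % (k - 1) : ℕ)) / ((k : ℝ) - 2))

/-- `c(x₁,…,x_{k-1},F)`: copies of `F` in the complete multipartite graph with parts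
`Fin (x i)` plus one edge inside part `0`. -/
noncomputable def cParts {α : Type*} (k : ℕ) (x : Fin (k - 1) → ℕ) (F : SimpleGraph α) : ℕ :=
  sInf {c | ∃ i₀ : Fin (k - 1), ∃ a b : Fin (x i₀), (i₀ : ℕ) = 0 ∧ a ≠ b ∧
    c = copyCount F (completeMultipartiteGraph (fun i => Fin (x i)) ⊔
      fromEdgeSet {s(⟨i₀, a⟩, ⟨i₀, b⟩)})}

/-!
Take the complete bipartite graph with parts of sizes `b + R` and `b`, where `R = R₃(n,s,t)` and
`b = n⁻_{s,t}(n)`, add a matching of `s` edges inside the big part, and delete `m = m_{s,t}(n)`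
crossing edges, each joining a different matching edge to one fixed vertex of the small part.
The small part is independent and the big part spans only the matching, so every triangle is a
matching edge together with a common neighbour: there are `s b - m` of them, one endpoint of each
matching edge covers them all, and once `b > s` there are `s` pairwise disjoint ones. The graph
has `(b + R) b + s - m` edges, which is `⌊n²/4⌋ + t` precisely because
`R² = 4s - 4t - 4m + e(n)` and `n = 2b + R`.
-/

namespace SimpleGraph

open Function

variable {V W : Type*}

lemma edgeCount_eq_card_edgeFinset (G : SimpleGraph V) [Fintype G.edgeSet] :
    edgeCount G = #G.edgeFinset := by
  rw [edgeCount, Nat.card_eq_fintype_card, edgeFinset_card]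

lemma cliqueCount_eq_card_cliqueFinset [Fintype V] [DecidableEq V] (G : SimpleGraph V)
    [DecidableRel G.Adj] (k : ℕ) : cliqueCount G k = #(G.cliqueFinset k) := by
  rw [cliqueCount, Nat.card_eq_fintype_card, Fintype.card_subtype]
  simp only [cliqueFinset]

lemma edgeCount_map [Fintype V] [Fintype W] (G : SimpleGraph V) (f : V ↪ W) :
    edgeCount (G.map f) = edgeCount G := by
  classical
  rw [edgeCount_eq_card_edgeFinset, edgeCount_eq_card_edgeFinset]
  convert G.card_edgeFinset_map f

lemma cliqueCount_map [Fintype V] [DecidableEq V] [Fintype W] [DecidableEq W]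
    (G : SimpleGraph V) (f : V ↪ W) {k : ℕ} (hk : k ≠ 1) :
    cliqueCount (G.map f) k = cliqueCount G k := by
  classical
  rw [cliqueCount_eq_card_cliqueFinset, cliqueCount_eq_card_cliqueFinset,
    G.cliqueFinset_map f hk, Finset.card_map]

def HitsCliques (G : SimpleGraph V) (k : ℕ) (S : Finset V) : Prop :=
  ∀ T : Finset V, G.IsNClique k T → ∃ v ∈ T, v ∈ S

section cliqueCover

variable [Fintype V] [DecidableEq V] {G : SimpleGraph V} {k : ℕ}

lemma cliqueCover_le_card {S : Finset V} (hS : G.HitsCliques k S) : cliqueCover G k ≤ #S :=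
  Nat.sInf_le ⟨S, rfl, hS⟩

lemma exists_hitsCliques_card_eq_cliqueCover (hk : k ≠ 0) :
    ∃ S : Finset V, G.HitsCliques k S ∧ #S = cliqueCover G k := by
  have huniv : G.HitsCliques k univ := fun T hT => by
    obtain ⟨v, hv⟩ := Finset.card_pos.1 (hT.card_eq ▸ Nat.pos_of_ne_zero hk)
    exact ⟨v, hv, mem_univ v⟩
  obtain ⟨S, hcard, hS⟩ :=
    Nat.sInf_mem (s := {m | ∃ S : Finset V, #S = m ∧ G.HitsCliques k S}) ⟨_, univ, rfl, huniv⟩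
  exact ⟨S, hS, hcard⟩

lemma card_le_cliqueCover {ι : Type*} [Fintype ι] (hk : k ≠ 0) (T : ι → Finset V)
    (hT : ∀ i, G.IsNClique k (T i)) (hdisj : Pairwise (Disjoint on T)) :
    Fintype.card ι ≤ cliqueCover G k := by
  obtain ⟨S, hS, hcard⟩ := exists_hitsCliques_card_eq_cliqueCover (G := G) hk
  choose v hvT hvS using fun i => hS (T i) (hT i)
  have hv : Injective v := fun i j hij => by
    by_contra hne
    exact Finset.disjoint_left.1 (hdisj hne) (hvT i) (hij ▸ hvT j)
  rw [← hcard, ← Finset.card_univ]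
  exact Finset.card_le_card_of_injOn v (fun i _ => hvS i) hv.injOn

lemma cliqueCover_map [Fintype W] [DecidableEq W] (f : V ↪ W) (hk : 1 < k) :
    cliqueCover (G.map f) k = cliqueCover G k := by
  apply le_antisymm
  · obtain ⟨S, hS, hcard⟩ :=
      exists_hitsCliques_card_eq_cliqueCover (G := G) (k := k) (by omega)
    refine hcard ▸ Finset.card_map f ▸ cliqueCover_le_card fun T' hT' => ?_
    obtain ⟨T, hT, rfl⟩ := (isNClique_map_iff hk).1 hT'
    obtain ⟨v, hvT, hvS⟩ := hS T hT
    exact ⟨f v, Finset.mem_map_of_mem f hvT, Finset.mem_map_of_mem f hvS⟩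
  · obtain ⟨S', hS', hcard⟩ :=
      exists_hitsCliques_card_eq_cliqueCover (G := G.map f) (k := k) (by omega)
    refine le_trans (cliqueCover_le_card (S := S'.preimage f f.injective.injOn) fun T hT => ?_)
      (hcard ▸ Finset.card_le_card_of_injOn f (fun _ => Finset.mem_preimage.1) f.injective.injOn)
    obtain ⟨v', hv'T, hv'S⟩ := hS' _ hT.map
    obtain ⟨v, hvT, rfl⟩ := Finset.mem_map.1 hv'T
    exact ⟨v, hvT, Finset.mem_preimage.2 hv'S⟩

end cliqueCover

end SimpleGraph

variable {ι γ β : Type*}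

namespace matchingJoin

def removedPairs (J : Finset ι) : Finset ((ι × Bool ⊕ γ) × Option β) :=
  J.map ((Function.Embedding.sectL ι false).trans .inl) ×ˢ {none}

end matchingJoin

open matchingJoin in
/-- The big part is `ι × Bool ⊕ γ`, with the matching `(i, false) – (i, true)` on `ι × Bool`;
the small part is `Option β`, and the crossing edges from `(i, false)`, `i ∈ J`, to `none` are
deleted. -/
def matchingJoin (J : Finset ι) : SimpleGraph ((ι × Bool ⊕ γ) ⊕ Option β) where
  Adj
    | .inl (.inl (i, c)), .inl (.inl (j, d)) => i = j ∧ c ≠ d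
    | .inl x, .inr w | .inr w, .inl x => (x, w) ∉ removedPairs J
    | _, _ => False
  symm := ⟨by rintro ((⟨i, c⟩ | _) | _) ((⟨j, d⟩ | _) | _) h <;> simp_all [eq_comm]⟩
  loopless := ⟨by rintro ((⟨i, c⟩ | _) | _) h <;> simp_all⟩

namespace matchingJoin

variable {J : Finset ι}

@[simp] lemma pair_mem_removedPairs {i : ι} {c : Bool} {w : Option β} :
    ((.inl (i, c), w) : (ι × Bool ⊕ γ) × Option β) ∈ removedPairs J ↔
      c = false ∧ (i, w) ∈ J ×ˢ {none} := by
  simp only [removedPairs, Finset.product_singleton, Finset.mem_map,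
    Function.Embedding.trans_apply, Function.Embedding.sectL_apply, Function.Embedding.inl_apply,
    Function.Embedding.coeFn_mk, Prod.mk.injEq, exists_exists_and_eq_and, Sum.inl.injEq,
    Bool.false_eq, existsAndEq, true_and]
  tauto

lemma card_removedPairs : #(removedPairs (γ := γ) (β := β) J) = #J := by
  rw [removedPairs, Finset.card_product, Finset.card_map, Finset.card_singleton, mul_one]

@[simp] lemma adj_pair_pair {i j : ι} {c d : Bool} :
    (matchingJoin (γ := γ) (β := β) J).Adj (.inl (.inl (i, c))) (.inl (.inl (j, d))) ↔
      i = j ∧ c ≠ d := .rfl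

@[simp] lemma adj_inl_inr {x : ι × Bool ⊕ γ} {w : Option β} :
    (matchingJoin J).Adj (.inl x) (.inr w) ↔ (x, w) ∉ removedPairs J := by
  rcases x with _ | _ <;> rfl

@[simp] lemma adj_inr_inl {x : ι × Bool ⊕ γ} {w : Option β} :
    (matchingJoin J).Adj (.inr w) (.inl x) ↔ (x, w) ∉ removedPairs J := by
  rcases x with _ | _ <;> rfl

@[simp] lemma not_adj_inr_inr {w w' : Option β} :
    ¬ (matchingJoin (γ := γ) J).Adj (.inr w) (.inr w') := id

@[simp] lemma not_adj_inl_unmatched {x : ι × Bool ⊕ γ} {g : γ} :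
    ¬ (matchingJoin (β := β) J).Adj (.inl x) (.inl (.inr g)) := by
  rcases x with _ | _ <;> exact id

@[simp] lemma not_adj_unmatched_inl {x : ι × Bool ⊕ γ} {g : γ} :
    ¬ (matchingJoin (β := β) J).Adj (.inl (.inr g)) (.inl x) :=
  fun h => not_adj_inl_unmatched h.symm

lemma not_adj_inl_of_adj_inl {x y z : ι × Bool ⊕ γ}
    (hxy : (matchingJoin (β := β) J).Adj (.inl x) (.inl y))
    (hxz : (matchingJoin (β := β) J).Adj (.inl x) (.inl z)) :
    ¬ (matchingJoin (β := β) J).Adj (.inl y) (.inl z) := by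
  rcases x with ⟨i, c⟩ | _ <;> rcases y with ⟨j, d⟩ | _ <;> rcases z with ⟨k, e⟩ | _ <;>
    simp only [adj_pair_pair, not_adj_inl_unmatched, not_adj_unmatched_inl] at hxy hxz ⊢
  cases c <;> cases d <;> cases e <;> simp_all

section triangles

variable [DecidableEq ι] [DecidableEq γ] [DecidableEq β]

def matchedTriangle (i : ι) (w : Option β) : Finset ((ι × Bool ⊕ γ) ⊕ Option β) :=
  {.inl (.inl (i, false)), .inl (.inl (i, true)), .inr w}

lemma matchedTriangle_injective :
    Function.Injective (fun p : ι × Option β => matchedTriangle (γ := γ) p.1 p.2) := by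
  rintro ⟨i, w⟩ ⟨i', w'⟩ (h : matchedTriangle i w = matchedTriangle i' w')
  have hi : .inl (.inl (i, false)) ∈ matchedTriangle (γ := γ) i' w' := h ▸ by simp [matchedTriangle]
  have hw : .inr w ∈ matchedTriangle (γ := γ) i' w' := h ▸ by simp [matchedTriangle]
  simp only [matchedTriangle, Finset.mem_insert, Finset.mem_singleton] at hi hw
  simp_all

lemma isNClique_matchedTriangle {i : ι} {w : Option β} (h : (i, w) ∉ J ×ˢ {none}) :
    (matchingJoin J).IsNClique 3 (matchedTriangle (γ := γ) i w) := by
  rw [matchedTriangle, is3Clique_triple_iff]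
  simp_all

lemma exists_matchedTriangle_eq_of_adj {x y : ι × Bool ⊕ γ} {w : Option β}
    (hxy : (matchingJoin (β := β) J).Adj (.inl x) (.inl y))
    (hxw : (matchingJoin J).Adj (.inl x) (.inr w)) (hyw : (matchingJoin J).Adj (.inl y) (.inr w)) :
    ∃ i, (i, w) ∉ J ×ˢ {none} ∧
      matchedTriangle i w = ({.inl x, .inl y, .inr w} : Finset ((ι × Bool ⊕ γ) ⊕ Option β)) := by
  rcases x with ⟨i, c⟩ | _ <;> rcases y with ⟨j, d⟩ | _ <;>
    simp only [adj_pair_pair, not_adj_inl_unmatched, not_adj_unmatched_inl] at hxy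
  obtain ⟨rfl, hcd⟩ := hxy
  cases c <;> cases d <;> simp only [ne_eq, not_true_eq_false] at hcd
  · exact ⟨i, by simpa using hxw, rfl⟩
  · exact ⟨i, by simpa using hyw, Finset.insert_comm ..⟩

lemma exists_matchedTriangle_eq {T : Finset ((ι × Bool ⊕ γ) ⊕ Option β)}
    (hT : (matchingJoin J).IsNClique 3 T) :
    ∃ i w, (i, w) ∉ J ×ˢ {none} ∧ matchedTriangle i w = T := by
  obtain ⟨x, y, z, hxy, hxz, hyz, rfl⟩ := is3Clique_iff.1 hT
  rcases x with x | x <;> rcases y with y | y <;> rcases z with z | z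
  · exact (not_adj_inl_of_adj_inl hxy hxz hyz).elim
  · obtain ⟨i, hi, h⟩ := exists_matchedTriangle_eq_of_adj hxy hxz hyz
    exact ⟨i, z, hi, h⟩
  · obtain ⟨i, hi, h⟩ := exists_matchedTriangle_eq_of_adj hxz hxy hyz.symm
    exact ⟨i, y, hi, h.trans (by rw [Finset.pair_comm])⟩
  · exact (not_adj_inr_inr hyz).elim
  · obtain ⟨i, hi, h⟩ := exists_matchedTriangle_eq_of_adj hyz hxy.symm hxz.symm
    exact ⟨i, x, hi, h.trans (by ext; simp only [Finset.mem_insert, Finset.mem_singleton]; tauto)⟩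
  all_goals first | exact (not_adj_inr_inr hxy).elim | exact (not_adj_inr_inr hxz).elim

end triangles

def matchingEdge (i : ι) : Sym2 ((ι × Bool ⊕ γ) ⊕ Option β) :=
  s(.inl (.inl (i, false)), .inl (.inl (i, true)))

def crossingEdge (p : (ι × Bool ⊕ γ) × Option β) : Sym2 ((ι × Bool ⊕ γ) ⊕ Option β) :=
  s(.inl p.1, .inr p.2)

lemma matchingEdge_injective : Function.Injective (matchingEdge (ι := ι) (γ := γ) (β := β)) := by
  intro i j h
  simpa [matchingEdge, Sym2.eq_iff] using h

lemma crossingEdge_injective :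
    Function.Injective (crossingEdge (ι := ι) (γ := γ) (β := β)) := by
  rintro ⟨x, w⟩ ⟨y, v⟩ h
  simpa [crossingEdge, Sym2.eq_iff] using h

lemma mem_edgeSet_iff {e : Sym2 ((ι × Bool ⊕ γ) ⊕ Option β)} :
    e ∈ (matchingJoin J).edgeSet ↔
      (∃ i, matchingEdge i = e) ∨ ∃ p ∉ removedPairs J, crossingEdge p = e := by
  induction e using Sym2.ind with
  | h u v =>
    rcases u with ((⟨i, _ | _⟩ | g) | w) <;> rcases v with ((⟨j, _ | _⟩ | g') | w') <;>
      simp [matchingEdge, crossingEdge, eq_comm]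

variable [Fintype ι] [Fintype γ] [Fintype β] [DecidableEq ι] [DecidableEq γ] [DecidableEq β]

lemma edgeCount_add_card :
    edgeCount (matchingJoin (γ := γ) (β := β) J) + #J =
      Fintype.card ι + (2 * Fintype.card ι + Fintype.card γ) * (Fintype.card β + 1) := by
  classical
  have hE : (matchingJoin (γ := γ) (β := β) J).edgeFinset =
      univ.map ⟨_, matchingEdge_injective⟩ ∪
        (univ \ removedPairs J).map ⟨_, crossingEdge_injective⟩ := by
    ext e
    simp [mem_edgeSet_iff]
  have hdisj : Disjoint (univ.map ⟨_, matchingEdge_injective (γ := γ) (β := β)⟩)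
      ((univ \ removedPairs J).map ⟨_, crossingEdge_injective⟩) := by
    simp [Finset.disjoint_left, matchingEdge, crossingEdge]
  rw [edgeCount_eq_card_edgeFinset, hE, Finset.card_union_of_disjoint hdisj, Finset.card_map,
    Finset.card_map, ← card_removedPairs (γ := γ) (β := β) (J := J), add_assoc,
    Finset.card_sdiff_add_card_eq_card (Finset.subset_univ _), Finset.card_univ,
    Finset.card_univ, Fintype.card_prod, Fintype.card_sum, Fintype.card_prod, Fintype.card_bool,
    Fintype.card_option, mul_comm 2]

lemma cliqueCount_three_add_card :
    cliqueCount (matchingJoin (γ := γ) (β := β) J) 3 + #J =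
      Fintype.card ι * (Fintype.card β + 1) := by
  classical
  have htri : (matchingJoin (γ := γ) (β := β) J).cliqueFinset 3 =
      (univ \ J ×ˢ {none}).map ⟨_, matchedTriangle_injective⟩ := by
    ext T
    simp only [mem_cliqueFinset_iff, Finset.mem_map, Finset.mem_sdiff, Finset.mem_univ,
      true_and, Function.Embedding.coeFn_mk, Prod.exists]
    exact ⟨exists_matchedTriangle_eq, fun ⟨i, w, hiw, hT⟩ => hT ▸ isNClique_matchedTriangle hiw⟩
  have hJ : #(J ×ˢ ({none} : Finset (Option β))) = #J := by
    rw [Finset.card_product, Finset.card_singleton, mul_one]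
  rw [cliqueCount_eq_card_cliqueFinset, htri, Finset.card_map, ← hJ,
    Finset.card_sdiff_add_card_eq_card (Finset.subset_univ _),
    Finset.card_univ, Fintype.card_prod, Fintype.card_option]

lemma cliqueCover_three (h : Fintype.card ι ≤ Fintype.card β) :
    cliqueCover (matchingJoin (γ := γ) (β := β) J) 3 = Fintype.card ι := by
  apply le_antisymm
  · let S : Finset ((ι × Bool ⊕ γ) ⊕ Option β) :=
      univ.map ⟨fun i => .inl (.inl (i, true)), fun i j h => by simpa using h⟩
    refine (cliqueCover_le_card (S := S) fun T hT => ?_).trans_eq (by simp [S])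
    obtain ⟨i, w, -, rfl⟩ := exists_matchedTriangle_eq hT
    exact ⟨.inl (.inl (i, true)), by simp [matchedTriangle],
      Finset.mem_map_of_mem _ (Finset.mem_univ i)⟩
  · obtain ⟨f⟩ := Function.Embedding.nonempty_of_card_le h
    refine card_le_cliqueCover (by norm_num) (fun i => matchedTriangle i (some (f i)))
      (fun i => isNClique_matchedTriangle (by simp)) fun i j hij => ?_
    simp [Function.onFun, matchedTriangle, Finset.disjoint_left, hij]

end matchingJoin

lemma Nat.sq_mod_four (x : ℕ) : x ^ 2 % 4 = x % 2 := by
  rcases Nat.even_or_odd' x with ⟨k, rfl | rfl⟩ <;> ring_nf <;> omega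

lemma eDef_eq_mod_two (n : ℕ) : eDef n = n % 2 := by
  have := Nat.sq_mod_four n
  unfold eDef
  omega

lemma R3_sq_add_mst {s t : ℕ} (hts : t ≤ s) (n : ℕ) :
    R3 s t n ^ 2 + 4 * mst s t n + 4 * t = 4 * s + n % 2 := by
  have hmem : s - t ∈ {m : ℕ | ∃ p : ℕ, (p : ℤ) ^ 2 = 4 * s - 4 * t - 4 * m + eDef n} := by
    have hsq : (n % 2) ^ 2 = n % 2 := by
      rcases Nat.mod_two_eq_zero_or_one n with h | h <;> rw [h] <;> rfl
    refine ⟨n % 2, ?_⟩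
    rw [eDef_eq_mod_two, Nat.cast_sub hts, ← Nat.cast_pow, hsq]
    ring
  obtain ⟨p, hp⟩ := Nat.sInf_mem ⟨_, hmem⟩
  rw [← mst, eDef_eq_mod_two] at hp
  have hR : R3 s t n = p := by
    rw [R3, eDef_eq_mod_two, ← hp, ← Nat.cast_pow, Int.toNat_natCast, Nat.sqrt_eq']
  rw [hR]
  push_cast at hp
  zify
  linarith

/-- The small part has `b + 1 = n⁻_{s,t}(n)` vertices and the big part `2 s + r`. -/
lemma exists_part_sizes {s t n : ℕ} (hts : t ≤ s) (hn : 6 * s + 4 ≤ n) :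
    ∃ b r : ℕ, n = 2 * (b + 1) + R3 s t n ∧ 2 * s + r + (b + 1) = n ∧ s ≤ b ∧
      mst s t n ≤ s ∧ s + (2 * s + r) * (b + 1) = n ^ 2 / 4 + t + mst s t n := by
  have hR := R3_sq_add_mst hts n
  generalize R3 s t n = R at hR ⊢
  have hRs : R ≤ 2 * s + 1 := by nlinarith [Nat.mod_lt n two_pos]
  have hRn : R % 2 = n % 2 := by have := Nat.sq_mod_four R; omega
  obtain ⟨b, hb⟩ : ∃ b, n = 2 * (b + 1) + R := ⟨(n - R) / 2 - 1, by omega⟩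
  obtain ⟨r, hr⟩ : ∃ r, b + 1 + R = 2 * s + r := ⟨b + 1 + R - 2 * s, by omega⟩
  have hsq : n ^ 2 = 4 * ((2 * s + r) * (b + 1)) + R ^ 2 := by rw [hb, ← hr]; ring
  have := Nat.sq_mod_four n
  exact ⟨b, r, hb, by omega, by omega, by omega, by omega⟩

theorem stmt_1_general (s t : ℕ) (hts : t < s) :
    ∃ n₀ : ℕ, ∀ n ≥ n₀, ∃ G : SimpleGraph (Fin n),
      edgeCount G = n ^ 2 / 4 + t ∧ cliqueCover G 3 = s ∧
      (cliqueCount G 3 : ℚ) = (s : ℚ) * (((n : ℚ) - R3 s t n) / 2) - mst s t n := by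
  refine ⟨6 * s + 4, fun n hn => ?_⟩
  obtain ⟨b, r, hb, hn', hsb, hms, hE⟩ := exists_part_sizes hts.le hn
  obtain ⟨J, -, hJ⟩ := Finset.exists_subset_card_eq (s := (univ : Finset (Fin s)))
    (n := mst s t n) (by rwa [Finset.card_univ, Fintype.card_fin])
  have hcard : Fintype.card ((Fin s × Bool ⊕ Fin r) ⊕ Option (Fin b)) = n := by
    simpa [Fintype.card_sum, mul_comm] using hn'
  have hGE := matchingJoin.edgeCount_add_card (γ := Fin r) (β := Fin b) (J := J)
  have hGN := matchingJoin.cliqueCount_three_add_card (γ := Fin r) (β := Fin b) (J := J)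
  simp only [Fintype.card_fin, hJ] at hGE hGN
  refine ⟨(matchingJoin J).map (Fintype.equivFinOfCardEq hcard).toEmbedding, ?_, ?_, ?_⟩
  · rw [edgeCount_map]
    omega
  · rw [cliqueCover_map _ (by norm_num), matchingJoin.cliqueCover_three (by simpa using hsb),
      Fintype.card_fin]
  · have hnq : (n : ℚ) = 2 * (b + 1) + R3 s t n := by exact_mod_cast hb
    have hGNq : (cliqueCount (matchingJoin (γ := Fin r) (β := Fin b) J) 3 : ℚ) + mst s t n =
        s * (b + 1) := by exact_mod_cast hGN
    rw [cliqueCount_map _ _ (by norm_num), hnq]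
    linarith

/-- existence of an extremal graph achieving the triangle bound. -/
theorem stmt_1 (s t : ℕ) (ht : 1 ≤ t) (hts : t < s) :
    ∃ n₀ : ℕ, ∀ n ≥ n₀, ∃ G : SimpleGraph (Fin n),
      edgeCount G = n ^ 2 / 4 + t ∧ cliqueCover G 3 = s ∧
      (cliqueCount G 3 : ℚ) = (s : ℚ) * (((n : ℚ) - R3 s t n) / 2) - mst s t n :=
  stmt_1_general s t hts
end

section
/- Let s > t ≥ 1 and k ≥ 4 be integers and let n be sufficiently large with n⁻_{k,s,t} ∈ ℕ. Then there exists a simple graph G on n vertices with exactly t_{k−1}(n) + t edges, K_k-covering number τ_k(G) = s, and exactly N_k(G) = s·(n⁻_{k,s,t})^{k−2} copies of K_k; namely, the graph obtained from the complete (k−1)-partite graph with one part of size (n + (k−2)R_k(n,s,t))/(k−1) and k−2 parts of size n⁻_{k,s,t} by adding s pairwise disjoint edges inside the largest part. -/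
open Finset SimpleGraph

/-!
Let `G` be the complete `(k-1)`-partite graph with one part of size `a + R` and `k - 2` parts of
size `a`, plus `s` disjoint edges inside the large part. Since `G` has only `k - 1` parts, a
`k`-clique has two vertices in one part, which must be the ends of an added edge; it is then that
edge together with one vertex of each small part. So there are `s a^(k-2)` such cliques, they
are all met by a set consisting of one end of each added edge, and by no smaller set: a set of
fewer than `s` vertices misses both ends of some added edge and, when `a ≥ s`, a vertex of
every small part.

A complete multipartite graph on `n` vertices has `(n² - Σ p_i²)/2` edges, where the `p_i` are
the part sizes, and the equation `(k-2) R² = 2(k-1)(s-t) + (k-1-r) r` defining `R = R_k(n,s,t)`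
says precisely that `(a+R)² + (k-2) a²` exceeds the sum of squares of the Turán part sizes by
`2(s - t)`, so `G` has `t_{k-1}(n) + t` edges. Finally `R` is bounded in terms of `k` and `s`,
so `a ≥ 2s` once `n` is large.
-/

section IsoInvariance

variable {V W : Type*}

lemma edgeCount_map_equiv (G : SimpleGraph V) (e : V ≃ W) :
    edgeCount (G.map e) = edgeCount G :=
  (Nat.card_congr (Iso.map e G).mapEdgeSet).symm

lemma cliqueCount_map_equiv (G : SimpleGraph V) (e : V ≃ W) (k : ℕ) :
    cliqueCount (G.map e) k = cliqueCount G k := by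
  change Nat.card ((G.map e).cliqueSet k) = Nat.card (G.cliqueSet k)
  rw [cliqueSet_map_of_equiv]
  exact Nat.card_image_of_injective (Finset.map_injective _) _

lemma cliqueCover_map_equiv [Fintype V] [DecidableEq V] [Fintype W] [DecidableEq W]
    (G : SimpleGraph V) (e : V ≃ W) (k : ℕ) :
    cliqueCover (G.map e) k = cliqueCover G k := by
  unfold cliqueCover
  congr 1
  ext m
  constructor
  · rintro ⟨S, rfl, hS⟩
    refine ⟨S.map e.symm.toEmbedding, card_map _, fun T hT => ?_⟩
    obtain ⟨v, hvT, hvS⟩ := hS _ (hT.map (f := e.toEmbedding))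
    obtain ⟨u, huT, rfl⟩ := mem_map.mp hvT
    exact ⟨u, huT, mem_map.mpr ⟨e u, hvS, by simp⟩⟩
  · rintro ⟨S, rfl, hS⟩
    refine ⟨S.map e.toEmbedding, card_map _, fun T hT => ?_⟩
    obtain ⟨T₀, hT₀, rfl⟩ : T ∈ Finset.map e.toEmbedding '' G.cliqueSet k := by
      rw [← cliqueSet_map_of_equiv]; exact hT
    obtain ⟨v, hvT, hvS⟩ := hS T₀ hT₀
    exact ⟨e v, mem_map_of_mem _ hvT, mem_map_of_mem _ hvS⟩

end IsoInvariance

lemma edgeCount_sup_of_disjoint {V : Type*} [Finite V] {G H : SimpleGraph V} (h : Disjoint G H) :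
    edgeCount (G ⊔ H) = edgeCount G + edgeCount H := by
  simp only [edgeCount, Nat.card_coe_set_eq, edgeSet_sup]
  exact Set.ncard_union_eq (disjoint_edgeSet.mpr h)

lemma cliqueCover_eq_of_forall_le {V : Type*} [Fintype V] [DecidableEq V] {G : SimpleGraph V}
    {k s : ℕ} (S : Finset V) (hS : #S = s)
    (hcover : ∀ T, G.IsNClique k T → ∃ v ∈ T, v ∈ S)
    (hmin : ∀ S' : Finset V, (∀ T, G.IsNClique k T → ∃ v ∈ T, v ∈ S') → s ≤ #S') :
    cliqueCover G k = s :=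
  le_antisymm (Nat.sInf_le ⟨S, hS, hcover⟩)
    (le_csInf ⟨s, S, hS, hcover⟩ fun _ ⟨S', hS', h⟩ => hS' ▸ hmin S' h)

lemma two_mul_edgeCount_comap_top_add_sum_sq {V ι : Type*} [Fintype V] [Fintype ι]
    [DecidableEq ι] (p : V → ι) :
    2 * edgeCount ((⊤ : SimpleGraph ι).comap p) + ∑ i, #{v | p v = i} ^ 2 =
      Fintype.card V ^ 2 := by
  classical
  have hdeg (v : V) : ((⊤ : SimpleGraph ι).comap p).degree v + #{u | p u = p v} =
      Fintype.card V := by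
    rw [← card_neighborFinset_eq_degree, neighborFinset_eq_filter, add_comm]
    simpa [eq_comm] using card_filter_add_card_filter_not (s := univ) (fun u => p u = p v)
  have hfib : ∑ v, #{u | p u = p v} = ∑ i, #{v | p v = i} ^ 2 := by
    rw [← Finset.sum_fiberwise univ p]
    refine sum_congr rfl fun i _ => ?_
    rw [sum_congr rfl fun v hv => by rw [(mem_filter.mp hv).2], sum_const, smul_eq_mul, sq]
  rw [edgeCount, Nat.card_eq_fintype_card, ← edgeFinset_card, ← sum_degrees_eq_twice_card_edges,
    ← hfib, ← sum_add_distrib, sum_congr rfl fun v _ => hdeg v, sum_const, card_univ,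
    smul_eq_mul, sq]

lemma card_filter_val_mod_eq {n K x : ℕ} (hx : x < K) :
    #{v : Fin n | v.val % K = x} = n / K + if x < n % K then 1 else 0 := by
  have h := Nat.count_modEq_card n (x.zero_le.trans_lt hx) x
  rw [Nat.mod_eq_of_lt hx, Nat.count_eq_card_filter_range] at h
  rw [← h, ← card_map Fin.valEmbedding]
  congr 1
  ext y
  simp [Fin.exists_iff, Nat.ModEq, Nat.mod_eq_of_lt hx, and_comm]

lemma turanGraph_eq_comap {n K : ℕ} (hK : 0 < K) :
    turanGraph n K =
      (⊤ : SimpleGraph (Fin K)).comap fun v : Fin n => ⟨v % K, Nat.mod_lt _ hK⟩ := by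
  ext v w
  simp [turanGraph_adj, Fin.ext_iff]

lemma two_mul_turanEdges_add {n K : ℕ} (hK : 0 < K) :
    2 * turanEdges K n + (K * (n / K) ^ 2 + n % K * (2 * (n / K) + 1)) = n ^ 2 := by
  have hfib (i : Fin K) : #{v : Fin n | (⟨v % K, Nat.mod_lt _ hK⟩ : Fin K) = i} ^ 2 =
      (n / K) ^ 2 + if i.val < n % K then 2 * (n / K) + 1 else 0 := by
    simp only [Fin.ext_iff]
    rw [card_filter_val_mod_eq i.isLt]
    split_ifs <;> ring
  have h := two_mul_edgeCount_comap_top_add_sum_sq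
    fun v : Fin n => (⟨v % K, Nat.mod_lt _ hK⟩ : Fin K)
  rw [← turanGraph_eq_comap hK, Fintype.card_fin, sum_congr rfl fun i _ => hfib i,
    sum_add_distrib, sum_const, card_univ, Fintype.card_fin, smul_eq_mul, ← sum_filter,
    sum_const, Fin.card_filter_val_lt, min_eq_right (Nat.mod_lt _ hK).le, smul_eq_mul] at h
  rw [turanEdges, ← h]

namespace MatchedMultipartite

open Sum

variable (s m k a : ℕ)

/-- `inl (inl (i, β))` are the ends of the `i`-th added edge, `inl (inr _)` the remaining vertices
of the large part, and `inr (j, _)` the `j`-th small part. -/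
abbrev Vert : Type := (Fin s × Bool ⊕ Fin m) ⊕ Fin k × Fin a

def part : Vert s m k a → Option (Fin k) := Sum.elim (fun _ => none) (fun x => some x.1)

def matching : SimpleGraph (Vert s m k a) where
  Adj u v := ∃ i β, u = inl (inl (i, β)) ∧ v = inl (inl (i, !β))
  symm := ⟨fun _ _ ⟨i, β, hu, hv⟩ => ⟨i, !β, hv, by rw [hu, Bool.not_not]⟩⟩
  loopless := ⟨fun _ ⟨i, β, hu, hv⟩ => by simp [hu] at hv⟩

def graph : SimpleGraph (Vert s m k a) :=
  (⊤ : SimpleGraph (Option (Fin k))).comap (part s m k a) ⊔ matching s m k a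

def cliqueOf (i : Fin s) (f : Fin k → Fin a) : Finset (Vert s m k a) :=
  univ.image (Sum.elim (fun β => inl (inl (i, β))) (fun j => inr (j, f j)))

variable {s m k a}

lemma graph_adj {u v : Vert s m k a} :
    (graph s m k a).Adj u v ↔
      part s m k a u ≠ part s m k a v ∨ (matching s m k a).Adj u v := by
  simp [graph]

lemma part_eq_none_of_matching_adj {u v : Vert s m k a} (h : (matching s m k a).Adj u v) :
    part s m k a u = none := by
  obtain ⟨i, β, rfl, rfl⟩ := h
  rfl

lemma eq_of_matching_adj_of_matching_adj {u v w : Vert s m k a}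
    (hv : (matching s m k a).Adj u v) (hw : (matching s m k a).Adj u w) : v = w := by
  obtain ⟨i, β, rfl, rfl⟩ := hv
  obtain ⟨i', β', h, rfl⟩ := hw
  simp only [inl.injEq, Prod.mk.injEq] at h
  rw [h.1, h.2]

lemma mem_cliqueOf {i : Fin s} {f : Fin k → Fin a} {v : Vert s m k a} :
    v ∈ cliqueOf s m k a i f ↔ (∃ β, v = inl (inl (i, β))) ∨ ∃ j, v = inr (j, f j) := by
  simp [cliqueOf, Sum.exists, eq_comm]

lemma cliqueOf_isNClique (i : Fin s) (f : Fin k → Fin a) :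
    (graph s m k a).IsNClique (k + 2) (cliqueOf s m k a i f) := by
  refine ⟨?_, ?_⟩
  · intro u hu v hv huv
    rw [mem_coe, mem_cliqueOf] at hu hv
    rw [graph_adj]
    rcases hu with ⟨β, rfl⟩ | ⟨j, rfl⟩ <;> rcases hv with ⟨β', rfl⟩ | ⟨j', rfl⟩
    · refine .inr ⟨i, β, rfl, ?_⟩
      cases β <;> cases β' <;> simp_all
    · simp [part]
    · simp [part]
    · simp_all [part]
  · rw [cliqueOf, card_image_of_injective _ ?_, card_univ, Fintype.card_sum, Fintype.card_bool,
      Fintype.card_fin, add_comm]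
    rintro (β | j) (β' | j') h <;> simp_all

lemma exists_cliqueOf_eq {T : Finset (Vert s m k a)} (hT : (graph s m k a).IsNClique (k + 2) T) :
    ∃ i f, cliqueOf s m k a i f = T := by
  obtain ⟨hclique, hcard⟩ := hT
  have hmaps : Set.MapsTo (part s m k a) T (univ : Finset (Option (Fin k))) :=
    fun x _ => mem_coe.mpr (mem_univ _)
  obtain ⟨u, hu, v, hv, huv, hpart⟩ :=
    exists_ne_map_eq_of_card_lt_of_maps_to (by simp [hcard]) hmaps
  have hM : (matching s m k a).Adj u v := (graph_adj.mp (hclique hu hv huv)).resolve_left (· hpart)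
  have hbig : ∀ w ∈ T, w ≠ u → part s m k a w = part s m k a u →
      (matching s m k a).Adj u w :=
    fun w hw hwu h => (graph_adj.mp (hclique hu hw hwu.symm)).resolve_left (· h.symm)
  have hinj : Set.InjOn (part s m k a) (T.erase u) := by
    intro w hw w' hw' h
    by_contra hne
    rw [mem_coe, mem_erase] at hw hw'
    have hww' := (graph_adj.mp (hclique hw.2 hw'.2 hne)).resolve_left (· h)
    have hnone : part s m k a w = part s m k a u :=
      (part_eq_none_of_matching_adj hww').trans (part_eq_none_of_matching_adj hM).symm
    exact hne (eq_of_matching_adj_of_matching_adj (hbig w hw.2 hw.1 hnone)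
      (hbig w' hw'.2 hw'.1 (h ▸ hnone)))
  have hsurj := surjOn_of_injOn_of_card_le _ (hmaps.mono (by simp) subset_rfl) hinj
    (by simp [card_erase_of_mem hu, hcard])
  have hsmall (j : Fin k) : ∃ x, inr (j, x) ∈ T := by
    obtain ⟨w, hw, hwj⟩ := hsurj (mem_univ (some j))
    rcases w with _ | ⟨j', x⟩
    · simp [part] at hwj
    · obtain rfl : j' = j := by simpa [part] using hwj
      exact ⟨x, (mem_erase.mp hw).2⟩
  choose f hf using hsmall
  obtain ⟨i, β, rfl, rfl⟩ := hM
  refine ⟨i, f, eq_of_subset_of_card_le (fun w hw => ?_)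
    (by rw [hcard, (cliqueOf_isNClique i f).card_eq])⟩
  rcases mem_cliqueOf.mp hw with ⟨γ, rfl⟩ | ⟨j, rfl⟩
  · cases β <;> cases γ <;> assumption
  · exact hf j

lemma cliqueOf_injective :
    Function.Injective fun p : Fin s × (Fin k → Fin a) => cliqueOf s m k a p.1 p.2 := by
  rintro ⟨i, f⟩ ⟨i', f'⟩ (h : cliqueOf s m k a i f = cliqueOf s m k a i' f')
  have hi : inl (inl (i, false)) ∈ cliqueOf s m k a i' f' :=
    h ▸ mem_cliqueOf.mpr (.inl ⟨_, rfl⟩)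
  have hf (j : Fin k) : inr (j, f j) ∈ cliqueOf s m k a i' f' :=
    h ▸ mem_cliqueOf.mpr (.inr ⟨j, rfl⟩)
  simp only [mem_cliqueOf, inl.injEq, Prod.mk.injEq, Bool.false_eq, exists_eq_right,
    reduceCtorEq, exists_false, or_false, inr.injEq, exists_eq_left', false_or]
    at hi hf
  exact Prod.ext hi (funext hf)

lemma cliqueCount_graph : cliqueCount (graph s m k a) (k + 2) = s * a ^ k := by
  have hcliques : {T | (graph s m k a).IsNClique (k + 2) T} =
      Set.range fun p : Fin s × (Fin k → Fin a) => cliqueOf s m k a p.1 p.2 := by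
    ext T
    refine ⟨fun hT => ?_, ?_⟩
    · obtain ⟨i, f, rfl⟩ := exists_cliqueOf_eq hT
      exact ⟨(i, f), rfl⟩
    · rintro ⟨p, rfl⟩
      exact cliqueOf_isNClique _ _
  change Nat.card {T | (graph s m k a).IsNClique (k + 2) T} = _
  rw [hcliques, Nat.card_range_of_injective cliqueOf_injective]
  simp

lemma cliqueCover_graph (hsa : s ≤ a) : cliqueCover (graph s m k a) (k + 2) = s := by
  refine cliqueCover_eq_of_forall_le
    (univ.map ⟨fun i => inl (inl (i, false)), fun i i' h => by simpa using h⟩) (by simp)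
    (fun T hT => ?_) (fun S hS => ?_)
  · obtain ⟨i, f, rfl⟩ := exists_cliqueOf_eq hT
    exact ⟨_, mem_cliqueOf.mpr (.inl ⟨false, rfl⟩), mem_map_of_mem _ (mem_univ i)⟩
  by_contra! hlt
  obtain ⟨i, hi⟩ : ∃ i, ∀ β, inl (inl (i, β)) ∉ S := by
    by_contra! h
    choose β hβ using h
    have := card_le_card_of_injOn (s := univ) (fun i => inl (inl (i, β i))) (fun i _ => hβ i)
      (fun i _ i' _ h => by simp only [inl.injEq, Prod.mk.injEq] at h; exact h.1)
    simp at this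
    omega
  have hsmall (j : Fin k) : ∃ x, inr (j, x) ∉ S := by
    obtain ⟨_, hx, hxS⟩ := exists_mem_notMem_of_card_lt_card (s := S)
      (t := univ.map ⟨fun x => inr (j, x), fun x x' h => by simpa using h⟩) (by simp; omega)
    obtain ⟨x, -, rfl⟩ := mem_map.mp hx
    exact ⟨x, hxS⟩
  choose f hf using hsmall
  obtain ⟨v, hv, hvS⟩ := hS _ (cliqueOf_isNClique i f)
  rcases mem_cliqueOf.mp hv with ⟨β, rfl⟩ | ⟨j, rfl⟩
  exacts [hi β hvS, hf j hvS]

lemma edgeCount_matching : edgeCount (matching s m k a) = s := by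
  classical
  have hedges : (matching s m k a).edgeFinset =
      univ.image fun i => s(inl (inl (i, false)), inl (inl (i, true))) := by
    ext e
    induction e using Sym2.ind with | h u v => ?_
    simp only [mem_edgeFinset, mem_edgeSet, mem_image, mem_univ, true_and, Sym2.eq_iff]
    constructor
    · rintro ⟨i, β, rfl, rfl⟩
      cases β <;> simp
    · rintro ⟨i, ⟨rfl, rfl⟩ | ⟨rfl, rfl⟩⟩
      exacts [⟨i, false, rfl, rfl⟩, ⟨i, true, rfl, rfl⟩]
  rw [edgeCount, Nat.card_eq_fintype_card, ← edgeFinset_card, hedges,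
    card_image_of_injective _ fun i i' h => by simpa using h, card_univ, Fintype.card_fin]

lemma disjoint_comap_part_matching :
    Disjoint ((⊤ : SimpleGraph (Option (Fin k))).comap (part s m k a)) (matching s m k a) :=
  disjoint_left.mpr fun u v huv hM => by
    obtain ⟨i, β, rfl, rfl⟩ := hM
    exact huv rfl

lemma card_part_eq_none : #{v : Vert s m k a | part s m k a v = none} = 2 * s + m := by
  rw [card_filter, Fintype.sum_sum_type, Fintype.sum_sum_type]
  simp [part, mul_comm]

lemma card_part_eq_some (j : Fin k) : #{v : Vert s m k a | part s m k a v = some j} = a := by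
  rw [card_filter, Fintype.sum_sum_type, Fintype.sum_sum_type]
  simp only [part, elim_inl, reduceCtorEq, ite_false, sum_const_zero, elim_inr,
    Option.some.injEq, zero_add]
  rw [Fintype.sum_prod_type]
  simp [apply_ite]

lemma two_mul_edgeCount_graph :
    2 * edgeCount (graph s m k a) + ((2 * s + m) ^ 2 + k * a ^ 2) =
      (2 * s + m + k * a) ^ 2 + 2 * s := by
  have h := two_mul_edgeCount_comap_top_add_sum_sq (part s m k a)
  rw [Fintype.sum_option, card_part_eq_none, sum_congr rfl fun j _ => by rw [card_part_eq_some j],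
    sum_const, card_univ, Fintype.card_fin, smul_eq_mul] at h
  rw [graph, edgeCount_sup_of_disjoint disjoint_comap_part_matching, edgeCount_matching]
  have hcard : Fintype.card (Vert s m k a) = 2 * s + m + k * a := by simp [mul_comm]
  rw [hcard] at h
  linarith

end MatchedMultipartite

/-- With `n = K a + R = K q + r`, multiplying by `K` turns both sides into `n²` plus the two sides
of `hR`. -/
lemma sum_sq_parts_eq {K a R q r s t : ℤ} (hK : K ≠ 0) (hn : K * a + R = K * q + r)
    (hR : (K - 1) * R ^ 2 = 2 * K * (s - t) + (K - r) * r) :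
    K * q ^ 2 + r * (2 * q + 1) + 2 * s = (a + R) ^ 2 + (K - 1) * a ^ 2 + 2 * t := by
  apply mul_left_cancel₀ hK
  linear_combination (-(K * a + R + K * q + r)) * hn - hR

lemma edgeCount_graph_eq {s m k a n R t : ℕ} (hnR : n = (k + 1) * a + R)
    (hm : a + R = 2 * s + m)
    (hR : (k : ℤ) * R ^ 2 = 2 * ((k : ℤ) + 1) * ((s : ℤ) - t) +
      ((k : ℤ) + 1 - (n % (k + 1) : ℕ)) * (n % (k + 1) : ℕ)) :
    edgeCount (MatchedMultipartite.graph s m k a) = turanEdges (k + 1) n + t := by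
  have hsum : (k + 1) * (n / (k + 1)) ^ 2 + n % (k + 1) * (2 * (n / (k + 1)) + 1) + 2 * s =
      (2 * s + m) ^ 2 + k * a ^ 2 + 2 * t := by
    have h := sum_sq_parts_eq (K := k + 1) (a := a) (R := R) (q := (n / (k + 1) : ℕ))
      (r := (n % (k + 1) : ℕ)) (s := s) (t := t) (by positivity)
      (by exact_mod_cast hnR.symm.trans (Nat.div_add_mod n (k + 1)).symm)
      (by linear_combination hR)
    rw [← hm]
    generalize n / (k + 1) = q at h ⊢
    generalize n % (k + 1) = r at h ⊢
    zify
    linear_combination h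
  have hG := MatchedMultipartite.two_mul_edgeCount_graph (s := s) (m := m) (k := k) (a := a)
  have hT := two_mul_turanEdges_add (n := n) (K := k + 1) k.succ_pos
  rw [show 2 * s + m + k * a = n by rw [hnR]; linarith] at hG
  linarith

lemma exists_graph_of_sq_eq {k s t n a R : ℕ} (hk : 2 ≤ k) (hnR : n = (k - 1) * a + R)
    (hsa : 2 * s ≤ a)
    (hR : ((k : ℤ) - 2) * R ^ 2 = 2 * ((k : ℤ) - 1) * ((s : ℤ) - t) +
      ((k : ℤ) - 1 - (n % (k - 1) : ℕ)) * (n % (k - 1) : ℕ)) :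
    ∃ G : SimpleGraph (Fin n), edgeCount G = turanEdges (k - 1) n + t ∧
      cliqueCover G k = s ∧ cliqueCount G k = s * a ^ (k - 2) := by
  obtain ⟨k, rfl⟩ : ∃ k', k = k' + 2 := ⟨k - 2, by omega⟩
  simp only [Nat.add_sub_cancel, show k + 2 - 1 = k + 1 by omega] at hnR hR ⊢
  obtain ⟨m, hm⟩ : ∃ m, a + R = 2 * s + m := ⟨a + R - 2 * s, by omega⟩
  have hcard : Fintype.card (MatchedMultipartite.Vert s m k a) = n := by
    simp only [Fintype.card_sum, Fintype.card_prod, Fintype.card_fin, Fintype.card_bool]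
    rw [hnR, add_mul, one_mul]
    omega
  let e := Fintype.equivFinOfCardEq hcard
  refine ⟨(MatchedMultipartite.graph s m k a).map e, ?_, ?_, ?_⟩
  · rw [edgeCount_map_equiv]
    rw [Nat.cast_add, Nat.cast_two] at hR
    exact edgeCount_graph_eq hnR hm (by linear_combination hR)
  · rw [cliqueCover_map_equiv, MatchedMultipartite.cliqueCover_graph (by omega)]
  · rw [cliqueCount_map_equiv, MatchedMultipartite.cliqueCount_graph]

lemma sub_two_mul_Rk_sq {k s t : ℕ} (n : ℕ) (hk : 3 ≤ k) (hts : t ≤ s) :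
    ((k : ℝ) - 2) * Rk k s t n ^ 2 = 2 * ((k : ℝ) - 1) * ((s : ℝ) - t) +
      ((k : ℝ) - 1 - (n % (k - 1) : ℕ)) * (n % (k - 1) : ℕ) := by
  have hk' : (3 : ℝ) ≤ k := by exact_mod_cast hk
  have hr : ((n % (k - 1) : ℕ) : ℝ) ≤ (k : ℝ) - 1 := by
    have := Nat.cast_le (α := ℝ) |>.mpr (Nat.mod_lt n (show 0 < k - 1 by omega)).le
    rwa [Nat.cast_sub (by omega), Nat.cast_one] at this
  have hnum : 0 ≤ 2 * ((k : ℝ) - 1) * ((s : ℝ) - t) +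
      ((k : ℝ) - 1 - (n % (k - 1) : ℕ)) * (n % (k - 1) : ℕ) :=
    add_nonneg (mul_nonneg (by linarith) (sub_nonneg.mpr (by exact_mod_cast hts)))
      (mul_nonneg (sub_nonneg.mpr hr) (Nat.cast_nonneg _))
  rw [Rk, Real.sq_sqrt (div_nonneg hnum (by linarith)), mul_div_cancel₀ _ (by linarith)]

lemma exists_nat_eq_Rk {k s t n a : ℕ} (hk : 2 ≤ k)
    (ha : (a : ℝ) = ((n : ℝ) - Rk k s t n) / ((k : ℝ) - 1)) :
    ∃ R : ℕ, n = (k - 1) * a + R ∧ (R : ℝ) = Rk k s t n := by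
  have hk' : (2 : ℝ) ≤ k := by exact_mod_cast hk
  have hRk : Rk k s t n = n - ((k : ℝ) - 1) * a := by
    rw [ha, mul_div_cancel₀ _ (by linarith)]
    ring
  have hle : (k - 1) * a ≤ n := by
    have : (((k - 1) * a : ℕ) : ℝ) ≤ n := by
      push_cast [Nat.cast_sub (show 1 ≤ k by omega)]
      linarith [show 0 ≤ Rk k s t n from Real.sqrt_nonneg _]
    exact_mod_cast this
  refine ⟨n - (k - 1) * a, by omega, ?_⟩
  push_cast [Nat.cast_sub hle, Nat.cast_sub (show 1 ≤ k by omega)]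
  linarith

lemma two_mul_le_of_sub_two_mul_sq_eq {k s t n a R : ℕ} (hk : 3 ≤ k)
    (hn : (k - 1) * (4 * s + k) ≤ n) (hnR : n = (k - 1) * a + R)
    (hR : ((k : ℤ) - 2) * R ^ 2 = 2 * ((k : ℤ) - 1) * ((s : ℤ) - t) +
      ((k : ℤ) - 1 - (n % (k - 1) : ℕ)) * (n % (k - 1) : ℕ)) :
    2 * s ≤ a := by
  have hr : n % (k - 1) < k - 1 := Nat.mod_lt _ (by omega)
  generalize n % (k - 1) = r at hr hR
  zify [show 1 ≤ k by omega] at hn hnR hr ⊢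
  have hRle : (R : ℤ) ≤ (k - 1) * (2 * s + k) := by
    have hRsq : (R : ℤ) ≤ R ^ 2 := by exact_mod_cast Nat.le_self_pow two_ne_zero R
    have hst : ((k : ℤ) - 1) * (s - t) ≤ (k - 1) * s := by nlinarith
    have hrr : ((k : ℤ) - 1 - r) * r ≤ (k - 1) * k := by nlinarith
    nlinarith
  nlinarith

theorem stmt_7_general (k s t : ℕ) (hk : 4 ≤ k) (hts : t < s) :
    ∃ n₀ : ℕ, ∀ n ≥ n₀,
      (∃ a : ℕ, (a : ℝ) = ((n : ℝ) - Rk k s t n) / ((k : ℝ) - 1)) →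
      ∃ G : SimpleGraph (Fin n),
        edgeCount G = turanEdges (k - 1) n + t ∧ cliqueCover G k = s ∧
        (cliqueCount G k : ℝ) =
          (s : ℝ) * (((n : ℝ) - Rk k s t n) / ((k : ℝ) - 1)) ^ (k - 2) := by
  refine ⟨(k - 1) * (4 * s + k), fun n hn ⟨a, ha⟩ => ?_⟩
  obtain ⟨R, hnR, hR⟩ := exists_nat_eq_Rk (by omega) ha
  have hsq : ((k : ℤ) - 2) * R ^ 2 = 2 * ((k : ℤ) - 1) * ((s : ℤ) - t) +
      ((k : ℤ) - 1 - (n % (k - 1) : ℕ)) * (n % (k - 1) : ℕ) := by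
    have h := sub_two_mul_Rk_sq n (show 3 ≤ k by omega) hts.le
    rw [← hR] at h
    generalize n % (k - 1) = r at h ⊢
    exact_mod_cast h
  obtain ⟨G, hE, hC, hN⟩ :=
    exists_graph_of_sq_eq (by omega) hnR (two_mul_le_of_sub_two_mul_sq_eq (by omega) hn hnR hsq) hsq
  exact ⟨G, hE, hC, by rw [hN, ← ha]; push_cast; ring⟩

/-- when `n⁻_{k,s,t}` is a natural number and `n` is large, there exists a
graph with `t_{k-1}(n) + t` edges, `K_k`-covering number `s`, and exactly
`s·(n⁻_{k,s,t})^{k-2}` copies of `K_k`. -/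
theorem stmt_7 (k s t : ℕ) (hk : 4 ≤ k) (ht : 1 ≤ t) (hts : t < s) :
    ∃ n₀ : ℕ, ∀ n ≥ n₀,
      (∃ a : ℕ, (a : ℝ) = ((n : ℝ) - Rk k s t n) / ((k : ℝ) - 1)) →
      ∃ G : SimpleGraph (Fin n),
        edgeCount G = turanEdges (k - 1) n + t ∧ cliqueCover G k = s ∧
        (cliqueCount G k : ℝ) =
          (s : ℝ) * (((n : ℝ) - Rk k s t n) / ((k : ℝ) - 1)) ^ (k - 2) :=
  stmt_7_general k s t hk hts
end

section
/- Let k ≥ 3 and let F be a k-critical graph on f vertices. There exists a constant γ_F > 0 depending only on F such that the following holds for all sufficiently large n: if x₁, …, x_{k−1} are nonnegative integers with Σ_{i=1}^{k−1} x_i = n, and ⌊n/(k−1)⌋ − d ≤ x_i ≤ ⌈n/(k−1)⌉ + d for all i ∈ [k−1] where d ≤ n/(3(k−1)), then c(x₁, …, x_{k−1}, F) ≥ c(n,F) − γ_F·d·n^{f−3}. -/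
open Finset SimpleGraph

/-!
Colour `Fin n` by residues mod `k - 1`: the Turán graph is the complete multipartite graph on the
colour classes, and the extra edge `ab` lies inside one class. As `F` is not `(k - 1)`-colourable,
every copy of `F` uses the edge `ab`, so recolouring one vertex `w ∉ {a, b}` creates at most as many
new copies as there are `f`-vertex subgraphs through `a, b, w`, that is `O(n ^ (f - 3))`. Moving
vertices one at a time from overfull to underfull classes turns the Turán colouring into one with
class sizes `x` (up to relabelling the classes) in at most `2 (k - 1) d` moves.
-/

section Copies

variable {α V W : Type*} {F : SimpleGraph α}

lemma copyCount_congr {G : SimpleGraph V} {G' : SimpleGraph W} (e : G ≃g G') :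
    _root_.copyCount F G = _root_.copyCount F G' := by
  let σ : G.Subgraph ≃ G'.Subgraph :=
    { toFun := Subgraph.map e.toCopy.toHom
      invFun := Subgraph.map e.symm.toCopy.toHom
      left_inv := fun H => by
        rw [← Subgraph.map_comp]
        convert Subgraph.map_id H
        exact RelHom.ext e.symm_apply_apply
      right_inv := fun H => by
        rw [← Subgraph.map_comp]
        convert Subgraph.map_id H
        exact RelHom.ext e.apply_symm_apply }
  refine Nat.card_congr (σ.subtypeEquiv fun H => ?_)
  exact ⟨fun ⟨φ⟩ => ⟨φ.trans (e.toCopy.isoSubgraphMap H)⟩,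
    fun ⟨φ⟩ => ⟨φ.trans (e.toCopy.isoSubgraphMap H).symm⟩⟩

lemma copyCount_le_add_card_copies_mem [Finite V] {G G' : SimpleGraph V} (w : V)
    (h : ∀ u v, u ≠ w → v ≠ w → G.Adj u v → G'.Adj u v) :
    _root_.copyCount F G ≤ _root_.copyCount F G' +
      Nat.card {H : G.Subgraph // Nonempty (F ≃g H.coe) ∧ w ∈ H.verts} := by
  classical
  let IsCopy (H : G.Subgraph) : Prop := Nonempty (F ≃g H.coe)
  let toG' : {H : G.Subgraph // IsCopy H ∧ w ∉ H.verts} →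
      {H : G'.Subgraph // Nonempty (F ≃g H.coe)} := fun H =>
    ⟨{ verts := H.1.verts
       Adj := H.1.Adj
       adj_sub := fun huv => h _ _ (fun hu => H.2.2 (hu ▸ H.1.edge_vert huv))
         (fun hv => H.2.2 (hv ▸ H.1.edge_vert huv.symm)) (H.1.adj_sub huv)
       edge_vert := H.1.edge_vert
       symm := H.1.symm }, H.2.1⟩
  have htoG' : Function.Injective toG' := fun H H' hH =>
    Subtype.ext <| Subgraph.ext (congrArg (·.1.verts) hH) (congrArg (·.1.Adj) hH)
  have hsplit : {H // IsCopy H} ≃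
      {H // IsCopy H ∧ w ∈ H.verts} ⊕ {H // IsCopy H ∧ w ∉ H.verts} :=
    (Equiv.sumCompl fun H : {H // IsCopy H} => w ∈ H.1.verts).symm.trans
      ((Equiv.subtypeSubtypeEquivSubtypeInter IsCopy (w ∈ ·.verts)).sumCongr
        (Equiv.subtypeSubtypeEquivSubtypeInter IsCopy (w ∉ ·.verts)))
  rw [_root_.copyCount, Nat.card_congr hsplit, Nat.card_sum, add_comm]
  exact Nat.add_le_add_right (Nat.card_le_card_of_injective toG' htoG') _

end Copies

lemma card_le_of_forall_verts_eq {V : Type*} [DecidableEq V] {G : SimpleGraph V}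
    (𝒮 : Finset G.Subgraph) (T : Finset V) (h : ∀ H ∈ 𝒮, H.verts = ↑T) :
    #𝒮 ≤ 2 ^ (#T * #T) := by
  classical
  let adj (H : G.Subgraph) : Finset (V × V) := {p ∈ T ×ˢ T | H.Adj p.1 p.2}
  have hadj : ∀ H ∈ 𝒮, ∀ u v, H.Adj u v ↔ (u, v) ∈ adj H := fun H hH u v => by
    have hT : ∀ x, x ∈ H.verts → x ∈ T := fun x hx => mem_coe.mp (h H hH ▸ hx)
    simp only [adj, mem_filter, mem_product]
    exact ⟨fun huv => ⟨⟨hT _ (H.edge_vert huv), hT _ (H.edge_vert huv.symm)⟩, huv⟩, And.right⟩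
  have hinj : Set.InjOn adj 𝒮 := fun H hH H' hH' he =>
    Subgraph.ext ((h H hH).trans (h H' hH').symm) <| funext₂ fun u v => propext <| by
      rw [hadj H hH, hadj H' hH', he]
  calc #𝒮 ≤ #(T ×ˢ T).powerset :=
        card_le_card_of_injOn adj (fun H _ => mem_powerset.mpr (filter_subset _ _)) hinj
    _ = 2 ^ (#T * #T) := by rw [card_powerset, card_product]

lemma card_le_of_forall_superset_card_eq {V : Type*} [Fintype V] [DecidableEq V] (A : Finset V)
    (m : ℕ) (𝒯 : Finset (Finset V)) (h : ∀ T ∈ 𝒯, A ⊆ T ∧ #T = m) :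
    #𝒯 ≤ Fintype.card V ^ (m - #A) :=
  calc #𝒯 ≤ #(powersetCard (m - #A) (univ : Finset V)) := by
        refine card_le_card_of_injOn (· \ A) (fun T hT => ?_) (fun T hT T' hT' he => ?_)
        · simp [card_sdiff_of_subset (h T hT).1, (h T hT).2]
        · simp only at he
          rw [← sdiff_union_of_subset (h T hT).1, he, sdiff_union_of_subset (h T' hT').1]
    _ ≤ Fintype.card V ^ (m - #A) := by
        rw [card_powersetCard, card_univ]
        exact Nat.choose_le_pow _ _

lemma card_subgraphs_superset_le {V : Type*} [Fintype V] (G : SimpleGraph V) (A : Finset V)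
    (m : ℕ) : Nat.card {H : G.Subgraph // ↑A ⊆ H.verts ∧ H.verts.ncard = m} ≤
      2 ^ (m * m) * Fintype.card V ^ (m - #A) := by
  classical
  set S : Finset G.Subgraph := {H | ↑A ⊆ H.verts ∧ H.verts.ncard = m}
  let U (H : G.Subgraph) : Finset V := H.verts.toFinset
  have hU : ∀ H ∈ S, A ⊆ U H ∧ #(U H) = m := fun H hH => by
    simp only [S, mem_filter, mem_univ, true_and] at hH
    refine ⟨fun v hv => Set.mem_toFinset.mpr (hH.1 hv), ?_⟩
    rw [← hH.2, Set.ncard_eq_toFinset_card']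
  have hfiber : ∀ T ∈ S.image U, #{H ∈ S | U H = T} ≤ 2 ^ (m * m) := by
    intro T hT
    obtain ⟨H₀, hH₀, rfl⟩ := mem_image.mp hT
    rw [← (hU H₀ hH₀).2]
    refine card_le_of_forall_verts_eq _ _ fun H hH => ?_
    rw [← (mem_filter.mp hH).2, Set.coe_toFinset]
  have himage : #(S.image U) ≤ Fintype.card V ^ (m - #A) :=
    card_le_of_forall_superset_card_eq A m _ fun T hT => by
      obtain ⟨H, hH, rfl⟩ := mem_image.mp hT
      exact hU H hH
  calc Nat.card {H : G.Subgraph // ↑A ⊆ H.verts ∧ H.verts.ncard = m} = #S := by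
        rw [Nat.card_eq_fintype_card, Fintype.card_subtype]
    _ ≤ 2 ^ (m * m) * #(S.image U) := card_le_mul_card_image S _ hfiber
    _ ≤ 2 ^ (m * m) * Fintype.card V ^ (m - #A) := Nat.mul_le_mul_left _ himage

section MultipartiteAddEdge

variable {α V ι : Type*} {F : SimpleGraph α} {c : V → ι} {a b w : V}

/-- The complete multipartite graph whose parts are the fibres of `c`, plus the edge `ab`. -/
def multipartiteAddEdge (c : V → ι) (a b : V) : SimpleGraph V :=
  (⊤ : SimpleGraph ι).comap c ⊔ edge a b

lemma multipartiteAddEdge_adj {u v : V} : (multipartiteAddEdge c a b).Adj u v ↔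
    c u ≠ c v ∨ (u = a ∧ v = b ∨ u = b ∧ v = a) ∧ u ≠ v := by
  simp [multipartiteAddEdge, edge_adj]

/-- Without the edge `ab` a copy of `F` would inherit the colouring `c`. -/
lemma adj_of_copy_multipartiteAddEdge (hF : IsEmpty (F.Coloring ι))
    {H : (multipartiteAddEdge c a b).Subgraph} (hH : Nonempty (F ≃g H.coe)) : H.Adj a b := by
  by_contra hab
  obtain ⟨φ⟩ := hH
  refine hF.false ((Coloring.mk (fun v : H.verts => c v) fun {u v} huv => ?_).comp φ.toHom)
  rcases multipartiteAddEdge_adj.mp (H.adj_sub huv) with h | ⟨⟨hu, hv⟩ | ⟨hu, hv⟩, -⟩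
  · exact h
  · rw [Subgraph.coe_adj, hu, hv] at huv
    exact absurd huv hab
  · rw [Subgraph.coe_adj, hu, hv] at huv
    exact absurd huv.symm hab

lemma card_copies_mem_le [Fintype α] [Fintype V] (hF : IsEmpty (F.Coloring ι)) (hab : a ≠ b)
    (hwa : w ≠ a) (hwb : w ≠ b) :
    Nat.card {H : (multipartiteAddEdge c a b).Subgraph // Nonempty (F ≃g H.coe) ∧ w ∈ H.verts} ≤
      2 ^ (Fintype.card α * Fintype.card α) * Fintype.card V ^ (Fintype.card α - 3) := by
  classical
  have hcard : #({a, b, w} : Finset V) = 3 := by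
    rw [card_insert_of_notMem (by simp [hab, hwa.symm]), card_pair (Ne.symm hwb)]
  have hcopy : ∀ H : (multipartiteAddEdge c a b).Subgraph, Nonempty (F ≃g H.coe) → w ∈ H.verts →
      ↑({a, b, w} : Finset V) ⊆ H.verts ∧ H.verts.ncard = Fintype.card α := by
    rintro H ⟨φ⟩ hw
    have hadj := adj_of_copy_multipartiteAddEdge hF ⟨φ⟩
    refine ⟨?_, ?_⟩
    · simp [Set.insert_subset_iff, H.edge_vert hadj, H.edge_vert hadj.symm, hw]
    · rw [← Nat.card_coe_set_eq, ← Nat.card_eq_fintype_card, Nat.card_congr φ.toEquiv]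
  calc _ ≤ Nat.card {H : (multipartiteAddEdge c a b).Subgraph //
          ↑({a, b, w} : Finset V) ⊆ H.verts ∧ H.verts.ncard = Fintype.card α} :=
        Nat.card_le_card_of_injective _
          (Subtype.map_injective (fun H h => hcopy H h.1 h.2) Function.injective_id)
    _ ≤ _ := hcard ▸ card_subgraphs_superset_le _ _ _

lemma copyCount_update_le [Fintype α] [Fintype V] [DecidableEq V] (hF : IsEmpty (F.Coloring ι))
    (hab : a ≠ b) (hwa : w ≠ a) (hwb : w ≠ b) (j : ι) :
    _root_.copyCount F (multipartiteAddEdge (Function.update c w j) a b) ≤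
      _root_.copyCount F (multipartiteAddEdge c a b) +
        2 ^ (Fintype.card α * Fintype.card α) * Fintype.card V ^ (Fintype.card α - 3) := by
  refine (copyCount_le_add_card_copies_mem w fun u v hu hv huv => ?_).trans
    (Nat.add_le_add_left (card_copies_mem_le hF hab hwa hwb) _)
  rwa [multipartiteAddEdge_adj, Function.update_of_ne hu, Function.update_of_ne hv,
    ← multipartiteAddEdge_adj] at huv

end MultipartiteAddEdge

section FiberDeficit

variable {V ι : Type*} [Fintype V] [Fintype ι] [DecidableEq ι] {y : ι → ℕ} {c : V → ι}

def fiberDeficit (y : ι → ℕ) (c : V → ι) : ℕ := ∑ j, (y j - #{v | c v = j})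

lemma sum_card_fiber (c : V → ι) : ∑ j, #{v | c v = j} = Fintype.card V := by
  rw [← card_univ, card_eq_sum_card_fiberwise fun v _ => mem_univ (c v)]

lemma card_fiber_eq_of_fiberDeficit_eq_zero (hy : ∑ j, y j = Fintype.card V)
    (h : fiberDeficit y c = 0) (j : ι) : #{v | c v = j} = y j := by
  have hle : ∀ j ∈ univ, y j ≤ #{v | c v = j} := fun j hj =>
    Nat.sub_eq_zero_iff_le.mp (sum_eq_zero_iff.mp h j hj)
  exact ((sum_eq_sum_iff_of_le hle).mp (hy.trans (sum_card_fiber c).symm) j (mem_univ j)).symm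

omit [Fintype ι] in
lemma card_fiber_update_add [DecidableEq V] (c : V → ι) (w : V) (i j : ι) :
    #{v | Function.update c w i v = j} + (if c w = j then 1 else 0) =
      #{v | c v = j} + (if i = j then 1 else 0) := by
  simp only [card_filter]
  rw [← add_sum_erase univ _ (mem_univ w), ← add_sum_erase univ _ (mem_univ w),
    sum_congr rfl fun v hv => by rw [Function.update_of_ne (ne_of_mem_erase hv)],
    Function.update_self]
  ring

lemma fiberDeficit_update_add_one [DecidableEq V] {w : V} {j : ι}
    (hw : y (c w) < #{v | c v = c w}) (hj : #{v | c v = j} < y j) :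
    fiberDeficit y (Function.update c w j) + 1 = fiberDeficit y c := by
  have key : ∀ i, (y i - #{v | Function.update c w j v = i}) + (if j = i then 1 else 0) =
      y i - #{v | c v = i} := by
    intro i
    have h := card_fiber_update_add c w j i
    split_ifs at h ⊢ <;> subst_vars <;> omega
  have := Fintype.sum_congr _ _ key
  rwa [sum_add_distrib, sum_ite_eq, if_pos (mem_univ _)] at this

omit [Fintype ι] in
lemma exists_ne_ne_of_card_fiber_gt [DecidableEq V] {a b : V} {j : ι} (hc : c a = c b)
    (h2 : 2 ≤ y (c a)) (hj : y j < #{v | c v = j}) : ∃ w, c w = j ∧ w ≠ a ∧ w ≠ b := by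
  by_contra! h
  have hsub : filter (c · = j) univ ⊆ {a, b} := fun v hv => by
    rw [mem_filter] at hv
    by_cases hva : v = a
    · simp [hva]
    · simp [h v hv.2 hva]
  by_cases hcj : c a = j
  · have := (card_le_card hsub).trans card_le_two
    rw [hcj] at h2
    omega
  · have : #{v | c v = j} = 0 := card_eq_zero.mpr <| filter_eq_empty_iff.mpr fun v _ hv => by
      rcases mem_insert.mp (hsub (mem_filter.mpr ⟨mem_univ v, hv⟩)) with rfl | hv'
      · exact hcj hv
      · exact hcj (hc.trans ((mem_singleton.mp hv') ▸ hv))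
    omega

lemma exists_update_fiberDeficit_eq [DecidableEq V] {a b : V} {m : ℕ}
    (hy : ∑ j, y j = Fintype.card V) (hm : fiberDeficit y c = m + 1) (hc : c a = c b)
    (h2 : 2 ≤ y (c a)) : ∃ w, w ≠ a ∧ w ≠ b ∧ ∃ j, fiberDeficit y (Function.update c w j) = m := by
  obtain ⟨jp, hjp⟩ : ∃ jp, #{v | c v = jp} < y jp := by
    by_contra! h
    simp [fiberDeficit, Nat.sub_eq_zero_of_le (h _)] at hm
  obtain ⟨jm, hjm⟩ : ∃ jm, y jm < #{v | c v = jm} := by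
    by_contra! h
    have := sum_lt_sum (fun j _ => h j) ⟨jp, mem_univ _, hjp⟩
    rw [sum_card_fiber, hy] at this
    exact this.false
  obtain ⟨w, rfl, hwa, hwb⟩ := exists_ne_ne_of_card_fiber_gt hc h2 hjm
  refine ⟨w, hwa, hwb, jp, ?_⟩
  have := fiberDeficit_update_add_one hjm hjp
  omega

variable {α : Type*} [Fintype α] {F : SimpleGraph α}

lemma exists_recoloring_copyCount_le [DecidableEq V] (hF : IsEmpty (F.Coloring ι))
    (hy : ∑ j, y j = Fintype.card V) {a b : V} (hab : a ≠ b) (m : ℕ) :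
    ∀ c₀ : V → ι, fiberDeficit y c₀ = m → c₀ a = c₀ b → 2 ≤ y (c₀ a) →
      ∃ c : V → ι, (∀ j, #{v | c v = j} = y j) ∧ c a = c₀ a ∧ c b = c₀ b ∧
        _root_.copyCount F (multipartiteAddEdge c₀ a b) ≤
          _root_.copyCount F (multipartiteAddEdge c a b) + m *
            (2 ^ (Fintype.card α * Fintype.card α) * Fintype.card V ^ (Fintype.card α - 3)) := by
  induction m with
  | zero =>
    intro c₀ h0 _ _
    exact ⟨c₀, card_fiber_eq_of_fiberDeficit_eq_zero hy h0, rfl, rfl, by simp⟩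
  | succ m ih =>
    intro c₀ hm hc h2
    obtain ⟨w, hwa, hwb, j, hj⟩ := exists_update_fiberDeficit_eq hy hm hc h2
    have hc₁a : Function.update c₀ w j a = c₀ a := Function.update_of_ne hwa.symm _ _
    have hc₁b : Function.update c₀ w j b = c₀ b := Function.update_of_ne hwb.symm _ _
    obtain ⟨c, hcy, hca, hcb, hle⟩ :=
      ih _ hj (by rw [hc₁a, hc₁b, hc]) (hc₁a ▸ h2)
    refine ⟨c, hcy, hca.trans hc₁a, hcb.trans hc₁b, ?_⟩
    have hstep := copyCount_update_le (F := F) (c := Function.update c₀ w j) hF hab hwa hwb (c₀ w)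
    rw [Function.update_idem, Function.update_eq_self] at hstep
    rw [add_one_mul]
    omega

end FiberDeficit

lemma exists_equiv_apply_eq_pair {X Y : Type*} (e : X ≃ Y) {a b : X} {a' b' : Y} (hab : a ≠ b)
    (hab' : a' ≠ b') : ∃ e' : X ≃ Y, e' a = a' ∧ e' b = b' := by
  have hinj : ∀ {Z : Type _} {u v : Z}, u ≠ v → Function.Injective ![u, v] := fun huv i j => by
    fin_cases i <;> fin_cases j <;> simp [huv, huv.symm]
  obtain ⟨σ, hσ⟩ := Equiv.Perm.exists_extending_pair ![e a, e b] ![a', b']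
    (hinj (e.injective.ne hab)) (hinj hab')
  exact ⟨e.trans σ, hσ 0, hσ 1⟩

section Isomorphism

variable {V W ι : Type*} [Fintype V] [Fintype W] [DecidableEq ι]

lemma nonempty_iso_multipartiteAddEdge {c : V → ι} {c' : W → ι}
    (hcard : ∀ j, #{v | c v = j} = #{w | c' w = j}) {a b : V} {a' b' : W} (hab : a ≠ b)
    (hab' : a' ≠ b') (hb : c b = c a) (ha' : c' a' = c a) (hb' : c' b' = c a) :
    Nonempty (multipartiteAddEdge c a b ≃g multipartiteAddEdge c' a' b') := by
  classical
  have E : ∀ j, {v // c v = j} ≃ {w // c' w = j} := fun j =>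
    Fintype.equivOfCardEq (by rw [Fintype.card_subtype, Fintype.card_subtype, hcard])
  obtain ⟨σ, hσa, hσb⟩ := exists_equiv_apply_eq_pair (E (c a)) (a := ⟨a, rfl⟩) (b := ⟨b, hb⟩)
    (a' := ⟨a', ha'⟩) (b' := ⟨b', hb'⟩) (by simpa using hab) (by simpa using hab')
  set e := Equiv.ofFiberEquiv (Function.update E (c a) σ)
  have happly : ∀ j (v : {v // c v = j}), e v = Function.update E (c a) σ j v := by
    rintro j ⟨v, rfl⟩
    rfl
  have hea : e a = a' := by simpa [hσa] using happly (c a) ⟨a, rfl⟩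
  have heb : e b = b' := by simpa [hσb] using happly (c a) ⟨b, hb⟩
  have hmap : ∀ v, c' (e v) = c v := Equiv.ofFiberEquiv_map _
  clear_value e
  refine ⟨⟨e, fun {u v} => ?_⟩⟩
  simp only [multipartiteAddEdge_adj, hmap, ← hea, ← heb, e.apply_eq_iff_eq, e.injective.ne_iff]

end Isomorphism

lemma multipartiteAddEdge_equiv_comp {V ι κ : Type*} (π : ι ≃ κ) (c : V → ι) (a b : V) :
    multipartiteAddEdge (π ∘ c) a b = multipartiteAddEdge c a b := by
  ext u v
  simp [multipartiteAddEdge_adj]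

lemma cParts_eq_copyCount {α V : Type*} [Fintype V] {F : SimpleGraph α} {k : ℕ}
    {x : Fin (k - 1) → ℕ} (c : V → Fin (k - 1)) (hx : ∀ i, #{v | c v = i} = x i) {a b : V}
    (hab : a ≠ b) (hb : c b = c a) (ha : (c a : ℕ) = 0) :
    cParts k x F = _root_.copyCount F (multipartiteAddEdge c a b) := by
  classical
  have hfst : ∀ i, #{p : Σ i, Fin (x i) | p.1 = i} = x i := fun i => by
    rw [← Fintype.card_subtype, Fintype.card_congr (Equiv.sigmaSubtype i), Fintype.card_fin]
  have hval : ∀ i₀ (a' b' : Fin (x i₀)), (i₀ : ℕ) = 0 → a' ≠ b' →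
      _root_.copyCount F (completeMultipartiteGraph (fun i => Fin (x i)) ⊔
        fromEdgeSet {s(⟨i₀, a'⟩, ⟨i₀, b'⟩)}) = _root_.copyCount F (multipartiteAddEdge c a b) := by
    intro i₀ a' b' h0 hne
    obtain rfl : i₀ = c a := Fin.ext (h0.trans ha.symm)
    obtain ⟨e⟩ := nonempty_iso_multipartiteAddEdge (c := Sigma.fst) (c' := c)
      (fun j => (hfst j).trans (hx j).symm) (a := ⟨c a, a'⟩) (b := ⟨c a, b'⟩)
      (by simpa using hne) hab rfl rfl hb
    exact copyCount_congr e
  have h2 : 2 ≤ x (c a) := by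
    rw [← hx, ← card_pair hab]
    exact card_le_card (by simp [insert_subset_iff, hb])
  have hne : (⟨0, by omega⟩ : Fin (x (c a))) ≠ ⟨1, by omega⟩ := by simp
  refine le_antisymm (Nat.sInf_le ⟨c a, _, _, ha, hne, (hval _ _ _ ha hne).symm⟩)
    (le_csInf ⟨_, c a, _, _, ha, hne, rfl⟩ ?_)
  rintro _ ⟨i₀, a', b', h0, hne', rfl⟩
  exact (hval i₀ a' b' h0 hne').ge

section Turan

variable {n r : ℕ}

def turanColoring (hr : 0 < r) (v : Fin n) : Fin r := ⟨v % r, Nat.mod_lt _ hr⟩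

lemma turanGraph_eq_comap_turanColoring (hr : 0 < r) :
    turanGraph n r = (⊤ : SimpleGraph (Fin r)).comap (turanColoring hr) := by
  ext u v
  simp [turanGraph_adj, turanColoring, Fin.ext_iff]

lemma card_turanColoring_fiber (hr : 0 < r) (j : Fin r) :
    n / r ≤ #{v | turanColoring (n := n) hr v = j} ∧
      #{v | turanColoring (n := n) hr v = j} ≤ n / r + 1 := by
  have : #{v | turanColoring (n := n) hr v = j} = n.count (· ≡ j [MOD r]) := by
    rw [Nat.count_eq_card_filter_range, ← card_map Fin.valEmbedding]
    congr 1
    ext m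
    simp only [mem_map, mem_filter, mem_univ, true_and, Fin.valEmbedding_apply, mem_range,
      turanColoring, Fin.ext_iff, Nat.ModEq, Nat.mod_eq_of_lt j.2]
    exact ⟨fun ⟨v, hv, hvm⟩ => hvm ▸ ⟨v.2, hv⟩, fun ⟨hm, hmj⟩ => ⟨⟨m, hm⟩, hmj, rfl⟩⟩
  rw [this, Nat.count_modEq_card n hr]
  split_ifs <;> omega

lemma exists_ne_turanColoring_eq (hr : 0 < r) (hn : 2 * r ≤ n) (j : Fin r) :
    ∃ a b : Fin n, a ≠ b ∧ turanColoring hr a = j ∧ turanColoring hr b = j :=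
  ⟨⟨j, by omega⟩, ⟨j + r, by omega⟩, by simp [Fin.ext_iff, hr.ne'],
    Fin.ext (Nat.mod_eq_of_lt j.2), Fin.ext (by simp [turanColoring, Nat.mod_eq_of_lt j.2])⟩

lemma cnF_le_copyCount {α : Type*} {F : SimpleGraph α} {k : ℕ} (hr : 0 < k - 1) {a b : Fin n}
    (hab : a ≠ b) (hc : turanColoring hr a = turanColoring hr b) :
    cnF k n F ≤ _root_.copyCount F (multipartiteAddEdge (turanColoring hr) a b) :=
  Nat.sInf_le ⟨a, b, hab, by simp [turanGraph_eq_comap_turanColoring hr, hc],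
    by rw [turanGraph_eq_comap_turanColoring hr]; rfl⟩

end Turan

section Balanced

variable {ι : Type*} [Fintype ι] {u t : ι → ℕ} {q : ℕ}

lemma sum_eq_card_mul_add_card_of_mem_Icc (hu : ∀ i, q ≤ u i ∧ u i ≤ q + 1) :
    ∑ i, u i = Fintype.card ι * q + #{i | u i = q + 1} := by
  classical
  calc ∑ i, u i = ∑ i, (q + if u i = q + 1 then 1 else 0) :=
        Fintype.sum_congr _ _ fun i => by have := hu i; split_ifs <;> omega
    _ = Fintype.card ι * q + #{i | u i = q + 1} := by
        rw [sum_add_distrib, sum_const, card_univ, smul_eq_mul, sum_boole, Nat.cast_id]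

lemma exists_perm_apply_symm_eq_of_mem_Icc (hu : ∀ i, q ≤ u i ∧ u i ≤ q + 1)
    (ht : ∀ i, q ≤ t i ∧ t i ≤ q + 1) (hsum : ∑ i, u i = ∑ i, t i) :
    ∃ π : Equiv.Perm ι, ∀ j, u (π.symm j) = t j := by
  classical
  rw [sum_eq_card_mul_add_card_of_mem_Icc hu, sum_eq_card_mul_add_card_of_mem_Icc ht] at hsum
  obtain ⟨π, hπ⟩ := Equiv.Perm.exists_map_finset_eq _ _ (Nat.add_left_cancel hsum)
  refine ⟨π, fun j => ?_⟩
  have hj : j ∈ map π.toEmbedding {i | u i = q + 1} ↔ t j = q + 1 := by simp [hπ]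
  rw [mem_map_equiv, mem_filter] at hj
  have := hu (π.symm j)
  have := ht j
  simp only [mem_univ, true_and] at hj
  omega

lemma exists_perm_sum_tsub_le [DecidableEq ι] {d : ℕ} (ht : ∀ j, q ≤ t j ∧ t j ≤ q + 1)
    (hu : ∀ i, q - d ≤ u i ∧ u i ≤ q + 1 + d) (hsum : ∑ i, u i = ∑ j, t j) :
    ∃ π : Equiv.Perm ι, ∑ j, (u (π.symm j) - t j) ≤ 2 * Fintype.card ι * d := by
  rcases Nat.eq_zero_or_pos d with rfl | hd
  · obtain ⟨π, hπ⟩ := exists_perm_apply_symm_eq_of_mem_Icc (by simpa using hu) ht hsum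
    exact ⟨π, by simp [hπ]⟩
  · refine ⟨Equiv.refl ι, ?_⟩
    calc ∑ j, (u ((Equiv.refl ι).symm j) - t j) ≤ ∑ _j : ι, 2 * d :=
          sum_le_sum fun j _ => by
            have := ht j
            have := hu j
            simp only [Equiv.refl_symm, Equiv.refl_apply]
            omega
      _ = 2 * Fintype.card ι * d := by rw [sum_const, card_univ, smul_eq_mul]; ring

end Balanced

lemma cnF_le_cParts_add {α : Type*} [Fintype α] {F : SimpleGraph α} {k n d : ℕ}
    (hF : IsEmpty (F.Coloring (Fin (k - 1)))) (hr : 0 < k - 1) (hn : 2 * (k - 1) ≤ n)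
    {x : Fin (k - 1) → ℕ} (hsum : ∑ i, x i = n)
    (hx : ∀ i, n / (k - 1) - d ≤ x i ∧ x i ≤ n / (k - 1) + 1 + d) (h2 : 2 ≤ x ⟨0, hr⟩) :
    cnF k n F ≤ cParts k x F +
      2 * (k - 1) * d * (2 ^ (Fintype.card α * Fintype.card α) * n ^ (Fintype.card α - 3)) := by
  classical
  obtain ⟨π, hπ⟩ := exists_perm_sum_tsub_le (card_turanColoring_fiber hr) hx
    (by rw [hsum, sum_card_fiber, Fintype.card_fin])
  obtain ⟨a, b, hab, ha, hb⟩ := exists_ne_turanColoring_eq hr hn (π ⟨0, hr⟩)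
  obtain ⟨c, hcx, hca, hcb, hle⟩ := exists_recoloring_copyCount_le (F := F) hF
    (y := fun j => x (π.symm j)) (by rw [Equiv.sum_comp, hsum, Fintype.card_fin]) hab _ _ rfl
    (ha.trans hb.symm) (by simpa [ha] using h2)
  have hcParts : cParts k x F = _root_.copyCount F (multipartiteAddEdge c a b) := by
    rw [cParts_eq_copyCount (π.symm ∘ c) (fun i => ?_) hab (by simp [hca, hcb, ha, hb])
      (by simp [hca, ha]), multipartiteAddEdge_equiv_comp]
    simp only [Function.comp_apply, Equiv.symm_apply_eq]
    rw [hcx, Equiv.symm_apply_apply]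
  rw [Fintype.card_fin] at hπ hle
  calc cnF k n F ≤ _ := cnF_le_copyCount hr hab (ha.trans hb.symm)
    _ ≤ _ := hle
    _ ≤ _ := by rw [hcParts]; gcongr; exact hπ

/-- if all part sizes are within `d` of balanced, then
`c(x₁,…,x_{k-1},F) ≥ c(n,F) - γ_F·d·n^{f-3}`. -/
theorem stmt_12 {α : Type*} [Fintype α] (k f : ℕ) (F : SimpleGraph α)
    (hk : 3 ≤ k) (hF : IsCritical k F) (hf : Fintype.card α = f) :
    ∃ γ : ℝ, 0 < γ ∧ ∃ n₀ : ℕ, ∀ n ≥ n₀, ∀ d : ℕ,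
      (d : ℝ) ≤ (n : ℝ) / (3 * ((k : ℝ) - 1)) →
      ∀ x : Fin (k - 1) → ℕ, (∑ i, x i) = n →
        (∀ i, n / (k - 1) - d ≤ x i ∧ x i ≤ (n + k - 2) / (k - 1) + d) →
        (cnF k n F : ℝ) - γ * d * (n : ℝ) ^ (f - 3) ≤ cParts k x F := by
  subst hf
  have hr : 0 < k - 1 := by omega
  have hF' : IsEmpty (F.Coloring (Fin (k - 1))) := ⟨fun C => by
    have := C.colorable.chromaticNumber_le
    rw [hF.1, Fintype.card_fin, Nat.cast_le] at this
    omega⟩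
  refine ⟨(2 * (k - 1) * 2 ^ (Fintype.card α * Fintype.card α) : ℕ), by positivity, 3 * k,
    fun n hn d hd x hsum hx => ?_⟩
  have hdn : 3 * (k - 1) * d ≤ n := by
    have hk' : (3 : ℝ) ≤ k := by exact_mod_cast hk
    rw [le_div_iff₀ (by linarith)] at hd
    exact_mod_cast (by push_cast [Nat.cast_sub (by omega : 1 ≤ k)]; linarith :
      ((3 * (k - 1) * d : ℕ) : ℝ) ≤ n)
  have hq : 3 * d ≤ n / (k - 1) ∧ 3 ≤ n / (k - 1) := by
    refine ⟨(Nat.le_div_iff_mul_le hr).mpr ?_, (Nat.le_div_iff_mul_le hr).mpr (by omega)⟩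
    rwa [Nat.mul_right_comm]
  have hceil : (n + k - 2) / (k - 1) ≤ n / (k - 1) + 1 := by
    rw [← Nat.add_div_right n hr]
    exact Nat.div_le_div_right (by omega)
  have := cnF_le_cParts_add hF' hr (by omega) hsum
    (fun i => ⟨(hx i).1, (hx i).2.trans (by omega)⟩) (by have := (hx ⟨0, hr⟩).1; omega)
  have hreal : (cnF k n F : ℝ) ≤ cParts k x F +
      (2 * (k - 1) * 2 ^ (Fintype.card α * Fintype.card α) : ℕ) * d * n ^ (Fintype.card α - 3) :=
    by exact_mod_cast this.trans_eq (by ring)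
  linarith
end

section
/- Let k ≥ 3 be fixed and let n be sufficiently large. Suppose d < n and x₁, …, x_{k−1} are nonnegative integers with Σ_{i=1}^{k−1} x_i = n. If Σ_{1 ≤ i < j ≤ k−1} x_i x_j ≥ t_{k−1}(n) − d, then ⌊n/(k−1)⌋ − d ≤ x_i ≤ ⌈n/(k−1)⌉ + d for all i ∈ [k−1]. -/
open Finset SimpleGraph

/-!
For integers `y` and `a` the defect `y² - ((2a + 1) y - a (a + 1)) = (y - a)(y - a - 1)` is a
product of two consecutive integers, hence nonnegative. Summing over the parts,
`∑ xⱼ² - ((2a + 1) n - r a (a + 1)) ≥ (xᵢ - a)(xᵢ - a - 1)` for every `i`. For `a = ⌊n/r⌋`, and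
also for `a = ⌈n/r⌉ - 1`, the subtracted term is `n² - 2 t_r(n)`, the sum of the squared part
sizes of the Turán graph. As `n² = ∑ xⱼ² + 2 ∑_{i<j} xᵢ xⱼ`, the hypothesis then gives
`(xᵢ - a)(xᵢ - a - 1) ≤ 2d`: the lower bound follows for `a = ⌊n/r⌋`, the upper one for
`a = ⌈n/r⌉ - 1`.
-/

theorem sq_sum_eq_sum_sq_add_two_mul_sum_Ioi {ι R : Type*} [Fintype ι] [LinearOrder ι]
    [LocallyFiniteOrderTop ι] [LocallyFiniteOrderBot ι] [CommRing R] (f : ι → R) :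
    (∑ i, f i) ^ 2 = ∑ i, f i ^ 2 + 2 * ∑ i, ∑ j ∈ Ioi i, f i * f j := by
  have hsplit (i : ι) : ∑ j, f i * f j =
      ∑ j ∈ Iio i, f i * f j + f i ^ 2 + ∑ j ∈ Ioi i, f i * f j := by
    have huniv : (univ : Finset ι) = Iio i ∪ Ici i := by ext j; simp [lt_or_ge]
    rw [huniv, sum_union (disjoint_left.2 fun j hj hj' => by simp_all [not_le_of_gt]),
      ← Ioi_insert, sum_insert (by simp), sq, add_assoc]
  have hswap : ∑ i, ∑ j ∈ Iio i, f i * f j = ∑ i, ∑ j ∈ Ioi i, f i * f j := by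
    rw [sum_comm' (t' := univ) (s' := fun j => Ioi j) (fun i j => by simp)]
    simp_rw [mul_comm]
  rw [sq, sum_mul_sum, sum_congr rfl fun i _ => hsplit i, sum_add_distrib, sum_add_distrib,
    hswap]
  ring

theorem Int.mul_sub_one_nonneg (u : ℤ) : 0 ≤ u * (u - 1) := by
  rcases le_or_gt u 0 with h | h <;> nlinarith

theorem Int.neg_le_and_le_add_one_of_mul_sub_one_le {u d : ℤ} (h : u * (u - 1) ≤ 2 * d) :
    -u ≤ d ∧ u ≤ d + 1 := by
  constructor <;> nlinarith [Int.mul_sub_one_nonneg (u - 1), Int.mul_sub_one_nonneg (u + 1)]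

/-- `(2a + 1) y - a (a + 1)` is the secant of `y ↦ y²` through `a` and `a + 1`; this is its sum
over `r` values `y` with sum `n`. -/
def secantSqSum (r n a : ℤ) : ℤ := (2 * a + 1) * n - r * a * (a + 1)

theorem sub_mul_sub_sub_one_le_sum_sq_sub_secantSqSum {ι : Type*} [Fintype ι] (f : ι → ℤ)
    (a : ℤ) (i : ι) :
    (f i - a) * (f i - a - 1) ≤ ∑ j, f j ^ 2 - secantSqSum (Fintype.card ι) (∑ j, f j) a :=
  calc (f i - a) * (f i - a - 1)
      ≤ ∑ j, (f j - a) * (f j - a - 1) :=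
        single_le_sum (fun j _ => Int.mul_sub_one_nonneg (f j - a)) (mem_univ i)
    _ = ∑ j, (f j ^ 2 - ((2 * a + 1) * f j - a * (a + 1))) := sum_congr rfl fun j _ => by ring
    _ = _ := by
        rw [sum_sub_distrib, sum_sub_distrib, ← mul_sum, sum_const, card_univ, nsmul_eq_mul,
          secantSqSum]
        ring

theorem turanEdges_eq_card_edgeFinset (r n : ℕ) :
    turanEdges r n = #(turanGraph n r).edgeFinset := by
  rw [turanEdges, edgeCount, Nat.card_eq_fintype_card, edgeFinset_card]

theorem sq_sub_two_mul_turanEdges {r : ℕ} (hr : 0 < r) (n : ℕ) :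
    (n : ℤ) ^ 2 - 2 * turanEdges r n = secantSqSum r n (n / r : ℕ) := by
  set q := n / r
  set s := n % r
  have hn : n = r * q + s := (Nat.div_add_mod n r).symm
  have hs : s ^ 2 ≤ n ^ 2 := Nat.pow_le_pow_left (Nat.mod_le n r) 2
  have hdvd : 2 * r ∣ (n ^ 2 - s ^ 2) * (r - 1) := by
    obtain ⟨c, hc⟩ := (Nat.even_mul_pred_self r).two_dvd
    have hsq : n ^ 2 - s ^ 2 = r * q * (r * q + 2 * s) :=
      Nat.sub_eq_of_eq_add (by rw [hn]; ring)
    refine ⟨q * s * (r - 1) + c * q ^ 2, ?_⟩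
    rw [hsq]
    linear_combination (r * q ^ 2) * hc
  have hturan : (turanEdges r n : ℚ) =
      ((n : ℚ) ^ 2 - s ^ 2) * (r - 1) / (2 * r) + s * (s - 1) / 2 := by
    rw [turanEdges_eq_card_edgeFinset, card_edgeFinset_turanGraph, Nat.cast_add,
      Nat.cast_div hdvd (by positivity), Nat.cast_choose_two]
    push_cast [Nat.cast_sub hs, Nat.cast_sub (Nat.one_le_iff_ne_zero.2 hr.ne')]
    ring
  have : ((n : ℤ) ^ 2 - 2 * turanEdges r n : ℚ) = (2 * q + 1) * n - r * q * (q + 1) := by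
    rw [hturan, hn]
    push_cast
    field_simp
    ring
  rw [secantSqSum]
  exact_mod_cast this

/-- `⌈n/r⌉ - 1 = ⌊n/r⌋` unless `r ∣ n`, and
`secantSqSum r n a - secantSqSum r n (a - 1) = 2 (n - r a)` vanishes at `a = n / r` when `r ∣ n`. -/
theorem secantSqSum_ceil_div_sub_one {r : ℕ} (hr : 0 < r) (n : ℕ) :
    secantSqSum r n (((n + r - 1) / r : ℕ) - 1) = secantSqSum r n (n / r : ℕ) := by
  obtain ⟨q, s, hs, rfl⟩ : ∃ q s, s < r ∧ n = r * q + s :=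
    ⟨_, _, Nat.mod_lt n hr, (Nat.div_add_mod n r).symm⟩
  have hq : (r * q + s) / r = q := by rw [Nat.mul_add_div hr, Nat.div_eq_of_lt hs, add_zero]
  rw [hq, secantSqSum, secantSqSum]
  rcases Nat.eq_zero_or_pos s with rfl | hs0
  · have hc : (r * q + 0 + r - 1) / r = q := by
      rw [show r * q + 0 + r - 1 = r * q + (r - 1) by omega, Nat.mul_add_div hr,
        Nat.div_eq_of_lt (by omega), add_zero]
    rw [hc]
    push_cast
    ring
  · have hc : (r * q + s + r - 1) / r = q + 1 := by
      rw [show r * q + s + r - 1 = r * (q + 1) + (s - 1) by rw [mul_add]; omega,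
        Nat.mul_add_div hr, Nat.div_eq_of_lt (by omega)]
    rw [hc]
    push_cast
    ring

theorem sum_sq_le_of_turanEdges_sub_le {r n d : ℕ} (hr : 0 < r) (x : Fin r → ℕ)
    (hsum : ∑ i, x i = n)
    (hpairs : (turanEdges r n : ℤ) - d ≤ ∑ i, ∑ j ∈ Ioi i, (x i : ℤ) * x j) :
    ∑ i, (x i : ℤ) ^ 2 ≤ secantSqSum r n (n / r : ℕ) + 2 * d := by
  have hsq := sq_sum_eq_sum_sq_add_two_mul_sum_Ioi (fun i => (x i : ℤ))
  rw [← Nat.cast_sum, hsum] at hsq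
  linarith [sq_sub_two_mul_turanEdges hr n]

theorem stmt_13_general (k : ℕ) :
    ∃ n₀ : ℕ, ∀ n ≥ n₀, ∀ d : ℕ, d < n → ∀ x : Fin (k - 1) → ℕ,
      (∑ i, x i) = n →
      (turanEdges (k - 1) n : ℤ) - d ≤ ∑ i, ∑ j ∈ Finset.Ioi i, (x i : ℤ) * x j →
      ∀ i, n / (k - 1) - d ≤ x i ∧ x i ≤ (n + k - 2) / (k - 1) + d := by
  refine ⟨0, fun n _ d _ x hsum hpairs i => ?_⟩
  have hr : 0 < k - 1 := i.pos
  have hsq := sum_sq_le_of_turanEdges_sub_le hr x hsum hpairs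
  have hbound (a : ℤ) : ((x i : ℤ) - a) * ((x i : ℤ) - a - 1) ≤
      ∑ j, (x j : ℤ) ^ 2 - secantSqSum (k - 1 : ℕ) n a := by
    simpa [← Nat.cast_sum, hsum] using
      sub_mul_sub_sub_one_le_sum_sq_sub_secantSqSum (fun j => (x j : ℤ)) a i
  have hfloor := Int.neg_le_and_le_add_one_of_mul_sub_one_le (u := x i - (n / (k - 1) : ℕ))
    (d := d) (by linarith [hbound (n / (k - 1) : ℕ)])
  have hceil := Int.neg_le_and_le_add_one_of_mul_sub_one_le
    (u := x i - (((n + (k - 1) - 1) / (k - 1) : ℕ) - 1)) (d := d)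
    (by linarith [hbound (((n + (k - 1) - 1) / (k - 1) : ℕ) - 1),
      secantSqSum_ceil_div_sub_one hr n])
  rw [show n + k - 2 = n + (k - 1) - 1 by omega]
  omega

/-- if `Σ_{i<j} x_i x_j ≥ t_{k-1}(n) - d`, then each `x_i` is within `d`
of `n/(k-1)`. -/
theorem stmt_13 (k : ℕ) (hk : 3 ≤ k) :
    ∃ n₀ : ℕ, ∀ n ≥ n₀, ∀ d : ℕ, d < n → ∀ x : Fin (k - 1) → ℕ,
      (∑ i, x i) = n →
      (turanEdges (k - 1) n : ℤ) - d ≤ ∑ i, ∑ j ∈ Finset.Ioi i, (x i : ℤ) * x j →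
      ∀ i, n / (k - 1) - d ≤ x i ∧ x i ≤ (n + k - 2) / (k - 1) + d :=
  stmt_13_general k
end

section
/- Let s > t ≥ 1 and n ∈ ℕ. Then n⁺_{s,t}(n) − n⁻_{s,t}(n) − m_{s,t}(n) ≥ 0, with equality if and only if either n is even and s − t = p² − 1 for some p ∈ ℕ, or n is odd and s − t = p(p+1) − 1 for some p ∈ ℕ; in all other cases the quantity is strictly positive. -/
open Finset SimpleGraph

lemma eDef_even {n : ℕ} (hn : Even n) : eDef n = 0 := by
  obtain ⟨k, rfl⟩ := hn
  have h : (k + k) ^ 2 = 4 * (k * k) := by ring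
  unfold eDef
  rw [h]; omega

lemma eDef_odd {n : ℕ} (hn : Odd n) : eDef n = 1 := by
  obtain ⟨k, rfl⟩ := hn
  have h : (2 * k + 1) ^ 2 = 4 * (k * k + k) + 1 := by ring
  unfold eDef
  rw [h]; omega

lemma even_case (s t n : ℕ) (hts : t < s) (hn : Even n) :
    mst s t n = (s - t) - Nat.sqrt (s - t) * Nat.sqrt (s - t) ∧
      R3 s t n = 2 * Nat.sqrt (s - t) := by
  set d := s - t with hd
  set q := Nat.sqrt d with hq
  have hq2 : q * q ≤ d := Nat.sqrt_le d
  have hq3 : d < (q + 1) * (q + 1) := Nat.lt_succ_sqrt d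
  have hcast : ((d : ℕ) : ℤ) = (s : ℤ) - t := by
    rw [hd]; push_cast [Nat.cast_sub (le_of_lt hts)]; ring
  have hmem : (d - q * q) ∈ {m : ℕ | ∃ p : ℕ, (p : ℤ) ^ 2 = 4 * s - 4 * t - 4 * m + eDef n} := by
    refine ⟨2 * q, ?_⟩
    rw [eDef_even hn, Nat.cast_sub hq2]
    push_cast
    linear_combination (4 : ℤ) * hcast
  have hmin : ∀ m ∈ {m : ℕ | ∃ p : ℕ, (p : ℤ) ^ 2 = 4 * s - 4 * t - 4 * m + eDef n},
      d - q * q ≤ m := by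
    rintro m ⟨p, hp⟩
    rw [eDef_even hn] at hp
    have hp' : (p : ℤ) ^ 2 = 4 * d - 4 * m := by linear_combination hp - 4 * hcast
    have hmd : m ≤ d := by
      have h0 : (0 : ℤ) ≤ (p : ℤ) ^ 2 := sq_nonneg _
      have : (m : ℤ) ≤ d := by linarith
      exact_mod_cast this
    have hps : p ^ 2 = 4 * (d - m) := by
      have : ((p ^ 2 : ℕ) : ℤ) = ((4 * (d - m) : ℕ) : ℤ) := by
        push_cast [Nat.cast_sub hmd]; linarith
      exact_mod_cast this
    have h2p : 2 ∣ p := by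
      refine Nat.Prime.dvd_of_dvd_pow Nat.prime_two (n := 2) ?_
      exact ⟨2 * (d - m), by rw [hps]; ring⟩
    obtain ⟨r, rfl⟩ := h2p
    have hrr : r * r = d - m := by
      have e1 : (2 * r) ^ 2 = 4 * (r * r) := by ring
      linarith [hps, e1]
    by_contra hcon
    push_neg at hcon
    have t1 : q * q < d - m := by
      rw [lt_tsub_iff_right] at hcon ⊢
      linarith
    have hq_lt : q < r := by
      by_contra h
      push_neg at h
      have := Nat.mul_le_mul h h
      linarith [hrr]
    have h6 : (q + 1) * (q + 1) ≤ r * r :=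
      Nat.mul_le_mul (Nat.succ_le_of_lt hq_lt) (Nat.succ_le_of_lt hq_lt)
    have h7 : d - m ≤ d := Nat.sub_le _ _
    linarith [hrr]
  have hS : mst s t n = d - q * q := by
    unfold mst
    exact le_antisymm (Nat.sInf_le hmem) (hmin _ (Nat.sInf_mem ⟨_, hmem⟩))
  refine ⟨hS, ?_⟩
  have hint : (4 * (s : ℤ) - 4 * t - 4 * (mst s t n) + eDef n) = ((2 * q) * (2 * q) : ℕ) := by
    rw [hS, eDef_even hn, Nat.cast_sub hq2]
    push_cast
    linear_combination (-4 : ℤ) * hcast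
  unfold R3
  rw [hint, Int.toNat_natCast, Nat.sqrt_eq]

lemma odd_case (s t n : ℕ) (hts : t < s) (hn : Odd n) :
    mst s t n = (s - t) - (Nat.findGreatest (fun p => p * p + p ≤ s - t) (s - t) *
        Nat.findGreatest (fun p => p * p + p ≤ s - t) (s - t) +
        Nat.findGreatest (fun p => p * p + p ≤ s - t) (s - t)) ∧
      R3 s t n = 2 * Nat.findGreatest (fun p => p * p + p ≤ s - t) (s - t) + 1 := by
  set d := s - t with hd
  set q := Nat.findGreatest (fun p => p * p + p ≤ d) d with hq
  have hq2 : q * q + q ≤ d := Nat.findGreatest_spec (P := fun p => p * p + p ≤ d) (Nat.zero_le d) (by simp)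
  have hq3 : d < (q + 1) * (q + 1) + (q + 1) := by
    by_cases h : q + 1 ≤ d
    · have := Nat.findGreatest_is_greatest (P := fun p => p * p + p ≤ d)
        (k := q + 1) (by omega) h
      exact Nat.lt_of_not_le this
    · have h1 : d ≤ q := by omega
      have h2 : q + 1 ≤ (q + 1) * (q + 1) := Nat.le_mul_of_pos_left _ (by omega)
      omega
  have hcast : ((d : ℕ) : ℤ) = (s : ℤ) - t := by
    rw [hd]; push_cast [Nat.cast_sub (le_of_lt hts)]; ring
  have hmem : (d - (q * q + q)) ∈
      {m : ℕ | ∃ p : ℕ, (p : ℤ) ^ 2 = 4 * s - 4 * t - 4 * m + eDef n} := by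
    refine ⟨2 * q + 1, ?_⟩
    rw [eDef_odd hn, Nat.cast_sub hq2]
    push_cast
    linear_combination (4 : ℤ) * hcast
  have hmin : ∀ m ∈ {m : ℕ | ∃ p : ℕ, (p : ℤ) ^ 2 = 4 * s - 4 * t - 4 * m + eDef n},
      d - (q * q + q) ≤ m := by
    rintro m ⟨p, hp⟩
    rw [eDef_odd hn] at hp
    have hp' : (p : ℤ) ^ 2 = 4 * d - 4 * m + 1 := by linear_combination hp - 4 * hcast
    have hmd : m ≤ d := by
      have h0 : (0 : ℤ) ≤ (p : ℤ) ^ 2 := sq_nonneg _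
      have h1 : 4 * (m : ℤ) ≤ 4 * d + 1 := by linarith
      have : (m : ℤ) ≤ d := by omega
      exact_mod_cast this
    have hps : p ^ 2 = 4 * (d - m) + 1 := by
      have : ((p ^ 2 : ℕ) : ℤ) = ((4 * (d - m) + 1 : ℕ) : ℤ) := by
        push_cast [Nat.cast_sub hmd]; linarith
      exact_mod_cast this
    have hop : Odd p := by
      have h1 : Odd (p ^ 2) := ⟨2 * (d - m), by rw [hps]; ring⟩
      rcases Nat.even_or_odd p with he | ho
      · exact absurd h1 (Nat.not_odd_iff_even.mpr (Nat.even_pow.mpr ⟨he, by norm_num⟩))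
      · exact ho
    obtain ⟨r, rfl⟩ := hop
    have hrr : r * r + r = d - m := by
      have e1 : (2 * r + 1) ^ 2 = 4 * (r * r + r) + 1 := by ring
      linarith [hps, e1]
    by_contra hcon
    push_neg at hcon
    have t1 : q * q + q < d - m := by
      rw [lt_tsub_iff_right] at hcon ⊢
      linarith
    have hq_lt : q < r := by
      by_contra h
      push_neg at h
      have := Nat.mul_le_mul h h
      linarith [hrr]
    have h6 : (q + 1) * (q + 1) ≤ r * r :=
      Nat.mul_le_mul (Nat.succ_le_of_lt hq_lt) (Nat.succ_le_of_lt hq_lt)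
    have h7 : d - m ≤ d := Nat.sub_le _ _
    linarith [hrr]
  have hS : mst s t n = d - (q * q + q) := by
    unfold mst
    exact le_antisymm (Nat.sInf_le hmem) (hmin _ (Nat.sInf_mem ⟨_, hmem⟩))
  refine ⟨hS, ?_⟩
  have hint : (4 * (s : ℤ) - 4 * t - 4 * (mst s t n) + eDef n)
      = (((2 * q + 1) * (2 * q + 1)) : ℕ) := by
    rw [hS, eDef_odd hn, Nat.cast_sub hq2]
    push_cast
    linear_combination (-4 : ℤ) * hcast
  unfold R3
  rw [hint, Int.toNat_natCast, Nat.sqrt_eq]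

lemma even_final (s t n : ℕ) (hts : t < s) (hn : Even n) :
    mst s t n ≤ R3 s t n ∧
      (R3 s t n = mst s t n ↔ ∃ p : ℕ, (s : ℤ) - t = (p : ℤ) ^ 2 - 1) := by
  obtain ⟨hm, hr⟩ := even_case s t n hts hn
  set d := s - t with hd
  set q := Nat.sqrt d with hq
  have hq2 : q * q ≤ d := Nat.sqrt_le d
  have hq3 : d < (q + 1) * (q + 1) := Nat.lt_succ_sqrt d
  have hexp : (q + 1) * (q + 1) = q * q + 2 * q + 1 := by ring
  have hcast : ((d : ℕ) : ℤ) = (s : ℤ) - t := by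
    rw [hd]; push_cast [Nat.cast_sub (le_of_lt hts)]; ring
  have hd1 : 1 ≤ d := by omega
  constructor
  · rw [hm, hr, tsub_le_iff_right]
    linarith
  · rw [hm, hr]
    constructor
    · intro h
      have hdq : d = 2 * q + q * q := (Nat.sub_eq_iff_eq_add hq2).mp h.symm
      have hdz : ((d : ℕ) : ℤ) = 2 * q + q * q := by exact_mod_cast hdq
      refine ⟨q + 1, ?_⟩
      push_cast
      linear_combination hdz - hcast
    · rintro ⟨p, hp⟩
      have hpn : p * p = d + 1 := by
        have : ((p * p : ℕ) : ℤ) = (d : ℤ) + 1 := by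
          push_cast
          linear_combination -hp - hcast
        exact_mod_cast this
      have hp2 : 2 ≤ p := by nlinarith
      have hub : q < p := by
        rw [hq]; exact Nat.sqrt_lt.mpr (by linarith)
      have hlb : p - 1 ≤ q := by
        rw [hq]
        apply Nat.le_sqrt.mpr
        obtain ⟨k, rfl⟩ : ∃ k, p = k + 1 := ⟨p - 1, by omega⟩
        simp only [Nat.add_sub_cancel]
        nlinarith
      obtain rfl : p = q + 1 := by omega
      have hdq : d = q * q + 2 * q := by nlinarith
      rw [eq_comm, Nat.sub_eq_iff_eq_add hq2]
      linarith

lemma odd_final (s t n : ℕ) (hts : t < s) (hn : Odd n) :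
    mst s t n ≤ R3 s t n ∧
      (R3 s t n = mst s t n ↔ ∃ p : ℕ, (s : ℤ) - t = (p : ℤ) * (p + 1) - 1) := by
  obtain ⟨hm, hr⟩ := odd_case s t n hts hn
  set d := s - t with hd
  set q := Nat.findGreatest (fun p => p * p + p ≤ d) d with hq
  have hq2 : q * q + q ≤ d :=
    Nat.findGreatest_spec (P := fun p => p * p + p ≤ d) (Nat.zero_le d) (by simp)
  have hq3 : d < (q + 1) * (q + 1) + (q + 1) := by
    by_cases h : q + 1 ≤ d
    · have := Nat.findGreatest_is_greatest (P := fun p => p * p + p ≤ d)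
        (k := q + 1) (by omega) h
      exact Nat.lt_of_not_le this
    · have h1 : d ≤ q := by omega
      have h2 : q + 1 ≤ (q + 1) * (q + 1) := Nat.le_mul_of_pos_left _ (by omega)
      omega
  have hexp : (q + 1) * (q + 1) + (q + 1) = q * q + 3 * q + 2 := by ring
  have hcast : ((d : ℕ) : ℤ) = (s : ℤ) - t := by
    rw [hd]; push_cast [Nat.cast_sub (le_of_lt hts)]; ring
  have hd1 : 1 ≤ d := by omega
  clear_value d q
  constructor
  · rw [hm, hr, tsub_le_iff_right]
    linarith
  · rw [hm, hr]
    constructor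
    · intro h
      have hdq : d = (2 * q + 1) + (q * q + q) := (Nat.sub_eq_iff_eq_add hq2).mp h.symm
      have hdz : ((d : ℕ) : ℤ) = 2 * q + 1 + (q * q + q) := by exact_mod_cast hdq
      refine ⟨q + 1, ?_⟩
      push_cast
      linear_combination hdz - hcast
    · rintro ⟨p, hp⟩
      have hpn : p * (p + 1) = d + 1 := by
        have : ((p * (p + 1) : ℕ) : ℤ) = (d : ℤ) + 1 := by
          push_cast
          linear_combination -hp - hcast
        exact_mod_cast this
      have hp1 : 1 ≤ p := by nlinarith
      have hub : q < p := by
        by_contra h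
        push_neg at h
        have h1 : p * p + p ≤ q * q + q :=
          Nat.add_le_add (Nat.mul_le_mul h h) h
        nlinarith
      have hlb : p - 1 ≤ q := by
        rw [hq]
        obtain ⟨k, rfl⟩ : ∃ k, p = k + 1 := ⟨p - 1, by omega⟩
        simp only [Nat.add_sub_cancel]
        have e1 : k * k + k ≤ d := by nlinarith
        have e2 : k ≤ d := by nlinarith
        exact Nat.le_findGreatest e2 e1
      obtain rfl : p = q + 1 := by omega
      have e3 : (q + 1) * ((q + 1) + 1) = q * q + 3 * q + 2 := by ring
      have hdq : d = q * q + 3 * q + 1 := by linarith only [hpn, e3]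
      rw [eq_comm, Nat.sub_eq_iff_eq_add hq2]
      linarith only [hdq]


/-- `n⁺_{s,t}(n) - n⁻_{s,t}(n) - m_{s,t}(n) = R₃(n,s,t) - m_{s,t}(n) ≥ 0`,
with equality exactly in the two described cases. -/
theorem stmt_16 (s t n : ℕ) (ht : 1 ≤ t) (hts : t < s) :
    mst s t n ≤ R3 s t n ∧
      (R3 s t n = mst s t n ↔
        (Even n ∧ ∃ p : ℕ, (s : ℤ) - t = (p : ℤ) ^ 2 - 1) ∨
        (Odd n ∧ ∃ p : ℕ, (s : ℤ) - t = (p : ℤ) * (p + 1) - 1)) := by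
  rcases Nat.even_or_odd n with hn | hn
  · obtain ⟨h1, h2⟩ := even_final s t n hts hn
    refine ⟨h1, h2.trans ?_⟩
    constructor
    · intro hp; exact Or.inl ⟨hn, hp⟩
    · rintro (⟨_, hp⟩ | ⟨ho, _⟩)
      · exact hp
      · exact absurd ho (Nat.not_odd_iff_even.mpr hn)
  · obtain ⟨h1, h2⟩ := odd_final s t n hts hn
    refine ⟨h1, h2.trans ?_⟩
    constructor
    · intro hp; exact Or.inr ⟨hn, hp⟩
    · rintro (⟨he, _⟩ | ⟨_, hp⟩)
      · exact absurd he (Nat.not_even_iff_odd.mpr hn)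
      · exact hp
end
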